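/- arXiv:1210.3607 — 8 statements merged into one kernel-verified Lean document; each statement's English description precedes it below -/
import Mathlib

section
/- Let A be an n×n irreducible row-stochastic matrix (all entries nonnegative and each row sums to 1). Define the vector w ∈ ℝ₊ⁿ by w_i = Σ_{T ∈ 𝒯_i} π(T,A), the sum over all i-trees of D(A) of their weights. Then Aᵀw = w (with the usual matrix-vector product) and w ≠ 0; consequently w/(Σ_{i=1}^n w_i) is a stationary distribution of the Markov chain with transition matrix A. -/
open scoped Classical

/-- `T` is an `i`-tree in the digraph on vertex set `V` with edge relation `R`:
every node `j ≠ i` has exactly one outgoing edge in `T`, node `i` has no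
outgoing edge in `T`, all edges of `T` are edges of the digraph, and `T`
contains no directed cycle. -/
def IsITree {V : Type*} (R : V → V → Prop) (i : V) (T : Finset (V × V)) : Prop :=
  (∀ e ∈ T, R e.1 e.2) ∧
  (∀ j : V, j ≠ i → ∃! k : V, (j, k) ∈ T) ∧
  (∀ k : V, (i, k) ∉ T) ∧
  (∀ j : V, ¬ Relation.TransGen (fun a b => (a, b) ∈ T) j j)

/-- Edge relation of the weighted digraph `D(A)`: there is an edge `(a, b)` iff `A a b > 0`. -/
def edgeRel {n : ℕ} (A : Matrix (Fin n) (Fin n) ℝ) : Fin n → Fin n → Prop :=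
  fun a b => 0 < A a b

/-- `A` is irreducible: for all `i ≠ j` there is a directed path from `i` to `j` in `D(A)`. -/
def IrreducibleMat {n : ℕ} (A : Matrix (Fin n) (Fin n) ℝ) : Prop :=
  ∀ i j : Fin n, i ≠ j → Relation.TransGen (edgeRel A) i j

/-- The weight `π(T, A)` of a set `T` of edges: the product of the corresponding entries of `A`. -/
noncomputable def treeWeight {n : ℕ} (A : Matrix (Fin n) (Fin n) ℝ)
    (T : Finset (Fin n × Fin n)) : ℝ :=
  ∏ e ∈ T, A e.1 e.2

/-- The finset `𝒯ᵢ` of all `i`-trees of `D(A)`. -/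
noncomputable def iTrees {n : ℕ} (A : Matrix (Fin n) (Fin n) ℝ) (i : Fin n) :
    Finset (Finset (Fin n × Fin n)) :=
  Finset.univ.filter (IsITree (edgeRel A) i)

/-- `A` is max-stochastic: every row has maximum entry `1`. -/
def MaxStochastic {n : ℕ} (A : Matrix (Fin n) (Fin n) ℝ) : Prop :=
  ∀ i, IsGreatest (Set.range (A i)) 1

/-- `w` is the maximal RST vector of `A`: `w i` is the maximum of the weights of
the `i`-trees of `D(A)`. -/
def IsMaxRSTVector {n : ℕ} (A : Matrix (Fin n) (Fin n) ℝ) (w : Fin n → ℝ) : Prop :=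
  ∀ i, IsGreatest {x | ∃ T, IsITree (edgeRel A) i T ∧ x = treeWeight A T} (w i)

/-- The edges of the closed walk determined by the list of vertices `c`
(consecutive edges together with the wrap-around edge). -/
def cycleEdges {n : ℕ} (c : List (Fin n)) : List (Fin n × Fin n) :=
  c.zip (c.rotate 1)

/-- `c` is a directed cycle in `D(A)`. -/
def IsCycleIn {n : ℕ} (A : Matrix (Fin n) (Fin n) ℝ) (c : List (Fin n)) : Prop :=
  c ≠ [] ∧ ∀ e ∈ cycleEdges c, 0 < A e.1 e.2

/-- The geometric mean of the edge weights of the cycle `c`: the `k`-th root of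
the product of the weights, where `k` is the length of the cycle. -/
noncomputable def cycleGeoMean {n : ℕ} (A : Matrix (Fin n) (Fin n) ℝ)
    (c : List (Fin n)) : ℝ :=
  (((cycleEdges c).map fun e => A e.1 e.2).prod) ^ ((c.length : ℝ)⁻¹)

/-- `i` is a critical node of `A` (with `μ(A) = 1`): `i` lies on a cycle whose
geometric mean is `1 = μ(A)`. -/
def CriticalNode {n : ℕ} (A : Matrix (Fin n) (Fin n) ℝ) (i : Fin n) : Prop :=
  ∃ c, IsCycleIn A c ∧ cycleGeoMean A c = 1 ∧ i ∈ c

/-- `(a, b)` is a critical edge of `A` (with `μ(A) = 1`): it lies on a cycle whose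
geometric mean is `1 = μ(A)`. -/
def CriticalEdge {n : ℕ} (A : Matrix (Fin n) (Fin n) ℝ) (a b : Fin n) : Prop :=
  ∃ c, IsCycleIn A c ∧ cycleGeoMean A c = 1 ∧ (a, b) ∈ cycleEdges c

/-- `i` and `j` lie in the same strongly connected component of the critical
graph `D^C(A)`. -/
def SameCritComponent {n : ℕ} (A : Matrix (Fin n) (Fin n) ℝ) (i j : Fin n) : Prop :=
  Relation.ReflTransGen (CriticalEdge A) i j ∧ Relation.ReflTransGen (CriticalEdge A) j i

/-- The consecutive edges of the walk determined by the list of vertices `P`. -/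
def pathEdges {n : ℕ} (P : List (Fin n)) : List (Fin n × Fin n) :=
  P.zip P.tail

/-- The weight of a path: the product of its edge weights. -/
noncomputable def pathWeight {n : ℕ} (A : Matrix (Fin n) (Fin n) ℝ)
    (P : List (Fin n)) : ℝ :=
  ((pathEdges P).map fun e => A e.1 e.2).prod

/-- `P` is a directed path in `D(A)` from `i` to `j`. -/
def IsPathIn {n : ℕ} (A : Matrix (Fin n) (Fin n) ℝ) (i j : Fin n)
    (P : List (Fin n)) : Prop :=
  P.head? = some i ∧ P.getLast? = some j ∧ 2 ≤ P.length ∧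
  ∀ e ∈ pathEdges P, 0 < A e.1 e.2

/-- `S` is the Kleene star `A*` of `A`: `S i i = 1`, and for `i ≠ j`, `S i j` is the
maximum weight of a directed path from `i` to `j` in `D(A)` (and `0` if there is none). -/
def IsKleeneStar {n : ℕ} (A S : Matrix (Fin n) (Fin n) ℝ) : Prop :=
  (∀ i, S i i = 1) ∧
  ∀ i j, i ≠ j →
    S i j = sSup (insert (0 : ℝ) {x | ∃ P, IsPathIn A i j P ∧ x = pathWeight A P})

/-- `A` is `p`-stochastic: `∑ⱼ aᵢⱼᵖ = 1` for every row `i`. -/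
def PStochastic {n : ℕ} (A : Matrix (Fin n) (Fin n) ℝ) (p : ℕ) : Prop :=
  ∀ i, ∑ j, A i j ^ p = 1

section AuxRel
open Relation
variable {V : Type*}

private lemma lemB {R P : V → V → Prop} {a b : V} (h : TransGen R a b) :
    TransGen (fun x y => R x y ∧ ¬ P x y) a b ∨
      ∃ x y, R x y ∧ P x y ∧ ReflTransGen (fun x y => R x y ∧ ¬ P x y) a x ∧
        ReflTransGen R y b := by
  induction h using TransGen.head_induction_on with
  | @single x h =>
    by_cases hp : P x b
    · exact Or.inr ⟨_, _, h, hp, ReflTransGen.refl, ReflTransGen.refl⟩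
    · exact Or.inl (TransGen.single ⟨h, hp⟩)
  | @head x c h ht IH =>
    by_cases hp : P x c
    · exact Or.inr ⟨_, _, h, hp, ReflTransGen.refl, ht.to_reflTransGen⟩
    · rcases IH with IH | ⟨x', y, hxy, hP, h1, h2⟩
      · exact Or.inl (TransGen.head ⟨h, hp⟩ IH)
      · exact Or.inr ⟨x', y, hxy, hP, ReflTransGen.head ⟨h, hp⟩ h1, h2⟩

private lemma lemE {R : V → V → Prop} {i : V} (hsink : ∀ k, ¬ R i k)
    (hacyc : ∀ z, ¬ TransGen (fun x y => R x y ∧ ¬ (y = i)) z z) :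
    ∀ z, ¬ TransGen R z z := by
  intro z hz
  rcases lemB (P := fun _ y => y = i) hz with h | ⟨x, y, hxy, rfl, h1, h2⟩
  · exact hacyc z h
  · rcases h2.cases_head with rfl | ⟨c, hc, _⟩
    · rcases TransGen.head'_iff.mp hz with ⟨c, hc, _⟩
      exact hsink _ hc
    · exact hsink _ hc

private lemma iter_chain {R : V → V → Prop} {g : V → V} {x : V} {a : ℕ} :
    ∀ t : ℕ, (∀ m, a ≤ m → m ≤ a + t → R (g^[m] x) (g^[m+1] x)) →
      TransGen R (g^[a] x) (g^[a + t + 1] x)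
  | 0, h => TransGen.single (h a le_rfl (by omega))
  | (t+1), h => by
      have h1 := iter_chain t (fun m hm hm' => h m hm (by omega))
      exact h1.tail (h (a+t+1) (by omega) (by omega))

private lemma reach_iterate {U : Finset (V × V)} [DecidableEq V] {g : V → V}
    (hg : ∀ j k, (j, k) ∈ U → k = g j) {x w : V}
    (h : ReflTransGen (fun a b => (a, b) ∈ U) x w) : ∃ m, w = g^[m] x := by
  induction h with
  | refl => exact ⟨0, rfl⟩
  | tail hs he IH =>
    obtain ⟨m, rfl⟩ := IH
    exact ⟨m + 1, by rw [Function.iterate_succ_apply', ← hg _ _ he]⟩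

private lemma orbit_exists [Fintype V] [DecidableEq V] {U : Finset (V × V)} {g : V → V} {i : V}
    (hmem : ∀ j, (j, g j) ∈ U)
    (hacyc : ∀ z, ¬ TransGen (fun a b => (a, b) ∈ U ∧ a ≠ i) z z) :
    ∃ t, 0 < t ∧ g^[t] i = i := by
  by_contra hcon
  push_neg at hcon
  have aux : ∀ a b : ℕ, a < b → g^[a] i = g^[b] i → False := by
    intro a b hab heq
    rcases Nat.eq_zero_or_pos a with rfl | ha
    · exact hcon b hab heq.symm
    · have hchain : TransGen (fun x y => (x, y) ∈ U ∧ x ≠ i) (g^[a] i) (g^[a + (b - a - 1) + 1] i) := by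
        refine iter_chain _ (fun m hm hm' => ?_)
        refine ⟨?_, ?_⟩
        · rw [Function.iterate_succ_apply']; exact hmem _
        · intro hzi
          exact hcon m (by omega) hzi
      rw [show a + (b - a - 1) + 1 = b by omega, ← heq] at hchain
      exact hacyc _ hchain
  obtain ⟨m, m', hne, heq⟩ := Fintype.exists_ne_map_eq_of_card_lt
    (fun m : Fin (Fintype.card V + 1) => g^[(m : ℕ)] i) (by simp)
  rcases lt_or_gt_of_ne (fun h : (m : ℕ) = (m' : ℕ) => hne (Fin.ext h)) with h | h
  · exact aux _ _ h heq
  · exact aux _ _ h heq.symm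

private lemma iter_per {g : V → V} {i : V} {t : ℕ} (ht : g^[t] i = i) :
    ∀ q, g^[q * t] i = i := by
  intro q
  induction q with
  | zero => simp
  | succ q IH =>
    have : (q + 1) * t = q * t + t := by ring
    rw [this, Function.iterate_add_apply, ht, IH]

private lemma iter_dvd {g : V → V} {i : V} {t : ℕ} (htpos : 0 < t) (ht : g^[t] i = i)
    (hmin : ∀ s, 0 < s → s < t → g^[s] i ≠ i) :
    ∀ v, g^[v] i = i → t ∣ v := by
  intro v hv
  have hmod : g^[v % t] i = i := by
    have hsplit : v = v % t + v / t * t := (Nat.mod_add_div' v t).symm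
    rw [hsplit, Function.iterate_add_apply, iter_per ht] at hv
    exact hv
  rcases Nat.eq_zero_or_pos (v % t) with h0 | hpos
  · exact Nat.dvd_of_mod_eq_zero h0
  · exact absurd hmod (hmin _ hpos (Nat.mod_lt _ htpos))

private lemma iter_last {g : V → V} {i : V} {t : ℕ} (htpos : 0 < t) (ht : g^[t] i = i)
    (hmin : ∀ s, 0 < s → s < t → g^[s] i ≠ i) :
    ∀ v, g^[v + 1] i = i → g^[v] i = g^[t - 1] i := by
  intro v hv
  obtain ⟨c, hc⟩ := iter_dvd htpos ht hmin _ hv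
  rcases Nat.eq_zero_or_pos c with rfl | hc1
  · omega
  obtain ⟨c', rfl⟩ := Nat.exists_eq_succ_of_ne_zero hc1.ne'
  obtain ⟨t', rfl⟩ := Nat.exists_eq_succ_of_ne_zero htpos.ne'
  have hc' : v + 1 = (t' + 1) * (c' + 1) := hc
  have h2 : (t' + 1) * (c' + 1) = (t' + 1) + c' * (t' + 1) := by ring
  have hveq : v = (t' + 1 - 1) + c' * (t' + 1) := by omega
  rw [hveq, Function.iterate_add_apply, iter_per ht]

private lemma keyJ [Fintype V] [DecidableEq V] {U : Finset (V × V)} {i : V}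
    (hfun : ∀ j, ∃! k, (j, k) ∈ U)
    (hacyc : ∀ z, ¬ TransGen (fun a b => (a, b) ∈ U ∧ a ≠ i) z z) :
    ∃! j, (j, i) ∈ U ∧
      ∀ z, ¬ TransGen (fun a b => (a, b) ∈ U.erase (j, i)) z z := by
  set g : V → V := fun j => (hfun j).exists.choose with hgdef
  have hmem : ∀ j, (j, g j) ∈ U := fun j => (hfun j).exists.choose_spec
  have huniq : ∀ j k, (j, k) ∈ U → k = g j := fun j k hk => (hfun j).unique hk (hmem j)
  have hex := orbit_exists hmem hacyc
  set t := Nat.find hex with htdef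
  obtain ⟨htpos, htit⟩ : 0 < t ∧ g^[t] i = i := Nat.find_spec hex
  have hmin : ∀ s, 0 < s → s < t → g^[s] i ≠ i := by
    intro s hs hst hsi
    exact Nat.find_min hex hst ⟨hs, hsi⟩
  set j := g^[t - 1] i with hjdef
  have hgj : g j = i := by
    rw [hjdef, ← Function.iterate_succ_apply' g (t - 1) i, Nat.succ_eq_add_one,
      show t - 1 + 1 = t by omega]
    exact htit
  have hji : (j, i) ∈ U := by rw [← hgj]; exact hmem j
  have hcyc : ∀ j' : V, j' ≠ j →
      TransGen (fun a b => (a, b) ∈ U.erase (j', i)) i i := by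
    intro j' hne
    have hchain : TransGen (fun a b => (a, b) ∈ U.erase (j', i))
        (g^[0] i) (g^[0 + (t - 1) + 1] i) := by
      refine iter_chain _ (fun m hm hm' => ?_)
      rw [Function.iterate_succ_apply']
      refine Finset.mem_erase.2 ⟨?_, hmem _⟩
      intro heq
      have h1 : g (g^[m] i) = i := congrArg Prod.snd heq
      have h2 : g^[m + 1] i = i := by rw [Function.iterate_succ_apply', h1]
      have hmt : m + 1 = t := by
        by_contra hmt
        exact hmin (m + 1) (by omega) (by omega) h2
      have hj : g^[m] i = j := by rw [hjdef, ← hmt]; simp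
      have hfst : g^[m] i = j' := congrArg Prod.fst heq
      exact hne (hfst.symm.trans hj)
    rwa [show (0:ℕ) + (t - 1) + 1 = t by omega, htit, Function.iterate_zero_apply] at hchain
  refine ⟨j, ⟨hji, ?_⟩, ?_⟩
  · -- acyclicity of U.erase (j, i)
    intro z hz
    rcases lemB (P := fun a _ => a = i) hz with h | ⟨x, y, hxy, hxi, h1, h2⟩
    · refine hacyc z (TransGen.mono ?_ _ _ h)
      exact fun a b hab => ⟨Finset.mem_of_mem_erase hab.1, hab.2⟩
    · rw [hxi] at hxy h1
      have hy : y = g i := huniq _ _ (Finset.mem_of_mem_erase hxy)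
      rw [hy] at h2
      have h1' : ReflTransGen (fun a b => (a, b) ∈ U.erase (j, i)) z i :=
        ReflTransGen.mono (fun a b hab => hab.1) _ _ h1
      have h3 : ReflTransGen (fun a b => (a, b) ∈ U.erase (j, i)) (g i) i := h2.trans h1'
      rcases h3.cases_tail with heq | ⟨z', hz'path, hz'e⟩
      · -- g i = i, so t = 1, j = i
        have ht1 : t = 1 := le_antisymm (Nat.find_le ⟨one_pos, by simpa using heq.symm⟩) htpos
        have hjeq : j = i := by rw [hjdef, ht1]; simp
        rw [hy, ← heq, hjeq] at hxy
        exact (Finset.mem_erase.1 hxy).1 rfl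
      · have hz'U : ReflTransGen (fun a b => (a, b) ∈ U) (g i) z' :=
          ReflTransGen.mono (fun a b hab => Finset.mem_of_mem_erase hab) _ _ hz'path
        obtain ⟨m, rfl⟩ := reach_iterate huniq hz'U
        have hm1 : g^[m + 1] i = g^[m] (g i) := Function.iterate_succ_apply g m i
        have hnext : g^[m + 2] i = i := by
          rw [show m + 2 = (m + 1) + 1 from rfl, Function.iterate_succ_apply', hm1]
          exact (huniq _ _ (Finset.mem_of_mem_erase hz'e)).symm
        have hlast : g^[m + 1] i = g^[t - 1] i :=
          iter_last htpos htit hmin (m + 1) hnext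
        have hz'j : g^[m] (g i) = j := by rw [← hm1, hlast]
        rw [hz'j] at hz'e
        exact (Finset.mem_erase.1 hz'e).1 rfl
  · rintro j' ⟨hj'U, hj'ac⟩
    by_contra hne
    exact hj'ac i (hcyc j' hne)

end AuxRel

section Matrix
open Relation Finset
variable {n : ℕ} (A : Matrix (Fin n) (Fin n) ℝ)

/-- the functional digraphs whose (unique) cycle passes through `i` -/
def IsFunCyc (i : Fin n) (U : Finset (Fin n × Fin n)) : Prop :=
  (∀ e ∈ U, edgeRel A e.1 e.2) ∧ (∀ j, ∃! k, (j, k) ∈ U) ∧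
    (∀ z, ¬ TransGen (fun a b => (a, b) ∈ U ∧ a ≠ i) z z)

noncomputable def funCyc (i : Fin n) : Finset (Finset (Fin n × Fin n)) :=
  Finset.univ.filter (IsFunCyc A i)

variable {A}

private lemma insertJ_mem {i j : Fin n} {T : Finset (Fin n × Fin n)}
    (hT : IsITree (edgeRel A) j T) (hji : 0 < A j i) :
    IsFunCyc A i (insert (j, i) T) := by
  obtain ⟨hedge, hout, hroot, hacyc⟩ := hT
  refine ⟨?_, ?_, ?_⟩
  · intro e he
    rcases Finset.mem_insert.1 he with rfl | he
    · exact hji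
    · exact hedge e he
  · intro x
    by_cases hx : x = j
    · subst hx
      refine ⟨i, Finset.mem_insert_self _ _, ?_⟩
      intro k' hk'
      rcases Finset.mem_insert.1 hk' with h | h
      · exact congrArg Prod.snd h
      · exact absurd h (hroot k')
    · obtain ⟨m, hm, huni⟩ := hout x hx
      refine ⟨m, Finset.mem_insert_of_mem hm, ?_⟩
      intro k' hk'
      rcases Finset.mem_insert.1 hk' with h | h
      · exact absurd (congrArg Prod.fst h) hx
      · exact huni k' h
  · refine lemE (fun k hk => hk.2 rfl) ?_
    intro z hz
    refine hacyc z (TransGen.mono ?_ _ _ hz)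
    rintro a b ⟨⟨hab, -⟩, hbne⟩
    rcases Finset.mem_insert.1 hab with h | h
    · exact absurd (congrArg Prod.snd h) hbne
    · exact h

private lemma insertI_mem {i k : Fin n} {T : Finset (Fin n × Fin n)}
    (hT : IsITree (edgeRel A) i T) (hik : 0 < A i k) :
    IsFunCyc A i (insert (i, k) T) := by
  obtain ⟨hedge, hout, hroot, hacyc⟩ := hT
  refine ⟨?_, ?_, ?_⟩
  · intro e he
    rcases Finset.mem_insert.1 he with rfl | he
    · exact hik
    · exact hedge e he
  · intro x
    by_cases hx : x = i
    · subst hx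
      refine ⟨k, Finset.mem_insert_self _ _, ?_⟩
      intro k' hk'
      rcases Finset.mem_insert.1 hk' with h | h
      · exact congrArg Prod.snd h
      · exact absurd h (hroot k')
    · obtain ⟨m, hm, huni⟩ := hout x hx
      refine ⟨m, Finset.mem_insert_of_mem hm, ?_⟩
      intro k' hk'
      rcases Finset.mem_insert.1 hk' with h | h
      · exact absurd (congrArg Prod.fst h) hx
      · exact huni k' h
  · intro z hz
    refine hacyc z (TransGen.mono ?_ _ _ hz)
    rintro a b ⟨hab, hane⟩
    rcases Finset.mem_insert.1 hab with h | h
    · exact absurd (congrArg Prod.fst h) hane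
    · exact h

private lemma treeWeight_pos {i : Fin n} {T : Finset (Fin n × Fin n)}
    (hT : IsITree (edgeRel A) i T) : 0 < treeWeight A T :=
  Finset.prod_pos (fun e he => hT.1 e he)


private lemma eraseI_tree {i : Fin n} {U : Finset (Fin n × Fin n)} {k : Fin n}
    (hedge : ∀ e ∈ U, edgeRel A e.1 e.2) (hfun : ∀ j, ∃! m, (j, m) ∈ U)
    (hacyc : ∀ z, ¬ TransGen (fun a b => (a, b) ∈ U ∧ a ≠ i) z z)
    (hk : (i, k) ∈ U) : IsITree (edgeRel A) i (U.erase (i, k)) := by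
  obtain ⟨-, -, huni⟩ := hfun i
  refine ⟨fun e he => hedge e (Finset.mem_of_mem_erase he), ?_, ?_, ?_⟩
  · intro x hx
    obtain ⟨m, hm, hu⟩ := hfun x
    exact ⟨m, Finset.mem_erase.2 ⟨fun hh => hx (congrArg Prod.fst hh), hm⟩,
      fun k' hk' => hu k' (Finset.mem_of_mem_erase hk')⟩
  · intro m hm
    obtain ⟨hne, hmem⟩ := Finset.mem_erase.1 hm
    have hmk : m = k := (hfun i).unique hmem hk
    exact hne (by rw [hmk])
  · intro z hz
    refine hacyc z (TransGen.mono ?_ _ _ hz)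
    rintro a b hab
    have h1 := Finset.mem_of_mem_erase hab
    refine ⟨h1, fun ha => ?_⟩
    subst ha
    have hbk : b = k := (hfun a).unique h1 hk
    exact (Finset.mem_erase.1 hab).1 (by rw [hbk])

private lemma eraseJ_tree {i j : Fin n} {U : Finset (Fin n × Fin n)}
    (hedge : ∀ e ∈ U, edgeRel A e.1 e.2) (hfun : ∀ x, ∃! m, (x, m) ∈ U)
    (hji : (j, i) ∈ U)
    (hjac : ∀ z, ¬ TransGen (fun a b => (a, b) ∈ U.erase (j, i)) z z) :
    IsITree (edgeRel A) j (U.erase (j, i)) := by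
  refine ⟨fun e he => hedge e (Finset.mem_of_mem_erase he), ?_, ?_, hjac⟩
  · intro x hx
    obtain ⟨m, hm, hu⟩ := hfun x
    exact ⟨m, Finset.mem_erase.2 ⟨fun hh => hx (congrArg Prod.fst hh), hm⟩,
      fun k' hk' => hu k' (Finset.mem_of_mem_erase hk')⟩
  · intro m hm
    obtain ⟨hne, hmem⟩ := Finset.mem_erase.1 hm
    have hmk : m = i := (hfun j).unique hmem hji
    exact hne (by rw [hmk])

private lemma eq1 (hnn : ∀ a b, 0 ≤ A a b) (hrow : ∀ a, ∑ b, A a b = 1) (i : Fin n) :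
    ∑ U ∈ funCyc A i, treeWeight A U = ∑ T ∈ iTrees A i, treeWeight A T := by
  have hsumk : ∑ k ∈ univ.filter (fun k => 0 < A i k), A i k = 1 := by
    rw [Finset.sum_filter_of_ne, hrow i]
    intro k _ hk
    exact lt_of_le_of_ne (hnn i k) (Ne.symm hk)
  have step : ∑ T ∈ iTrees A i, treeWeight A T
      = ∑ p ∈ (iTrees A i) ×ˢ (univ.filter (fun k => 0 < A i k)),
          A i p.2 * treeWeight A p.1 := by
    rw [Finset.sum_product]
    refine Finset.sum_congr rfl (fun T hT => ?_)
    dsimp only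
    rw [← Finset.sum_mul, hsumk, one_mul]
  rw [step]
  refine (Finset.sum_bij (fun p (_ : p ∈ (iTrees A i) ×ˢ (univ.filter (fun k => 0 < A i k)))
    => insert (i, p.2) p.1) ?_ ?_ ?_ ?_).symm
  · intro p hp
    obtain ⟨hT, hk⟩ := Finset.mem_product.1 hp
    have hTt : IsITree (edgeRel A) i p.1 := (Finset.mem_filter.1 hT).2
    have hkk : 0 < A i p.2 := (Finset.mem_filter.1 hk).2
    exact Finset.mem_filter.2 ⟨Finset.mem_univ _, insertI_mem hTt hkk⟩
  · intro p₁ hp₁ p₂ hp₂ heq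
    have hT₁ : IsITree (edgeRel A) i p₁.1 := (Finset.mem_filter.1 (Finset.mem_product.1 hp₁).1).2
    have hT₂ : IsITree (edgeRel A) i p₂.1 := (Finset.mem_filter.1 (Finset.mem_product.1 hp₂).1).2
    have hk₁ : 0 < A i p₁.2 := (Finset.mem_filter.1 (Finset.mem_product.1 hp₁).2).2
    have hU := insertI_mem hT₁ hk₁
    have h2 : (i, p₂.2) ∈ insert (i, p₁.2) p₁.1 := by
      rw [heq]; exact Finset.mem_insert_self _ _
    have hkk : p₁.2 = p₂.2 := (hU.2.1 i).unique (Finset.mem_insert_self _ _) h2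
    have hTT : p₁.1 = p₂.1 := by
      have e₁ : p₁.1 = (insert (i, p₁.2) p₁.1).erase (i, p₁.2) :=
        (Finset.erase_insert (hT₁.2.2.1 p₁.2)).symm
      have e₂ : p₂.1 = (insert (i, p₂.2) p₂.1).erase (i, p₂.2) :=
        (Finset.erase_insert (hT₂.2.2.1 p₂.2)).symm
      rw [e₁, e₂, heq, hkk]
    exact Prod.ext hTT hkk
  · intro U hU
    obtain ⟨hedge, hfun, hacyc⟩ : IsFunCyc A i U := (Finset.mem_filter.1 hU).2
    obtain ⟨k, hk, -⟩ := hfun i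
    refine ⟨(U.erase (i, k), k), ?_, Finset.insert_erase hk⟩
    refine Finset.mem_product.2 ⟨Finset.mem_filter.2 ⟨Finset.mem_univ _, ?_⟩,
      Finset.mem_filter.2 ⟨Finset.mem_univ _, hedge _ hk⟩⟩
    exact eraseI_tree hedge hfun hacyc hk
  · intro p hp
    have hT : IsITree (edgeRel A) i p.1 := (Finset.mem_filter.1 (Finset.mem_product.1 hp).1).2
    simp [treeWeight, Finset.prod_insert (hT.2.2.1 p.2)]

private lemma eq2 (hnn : ∀ a b, 0 ≤ A a b) (i : Fin n) :
    ∑ j, A j i * ∑ T ∈ iTrees A j, treeWeight A T = ∑ U ∈ funCyc A i, treeWeight A U := by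
  have hfilter : ∑ j, A j i * ∑ T ∈ iTrees A j, treeWeight A T
      = ∑ j ∈ univ.filter (fun j => 0 < A j i), A j i * ∑ T ∈ iTrees A j, treeWeight A T := by
    refine (Finset.sum_filter_of_ne ?_).symm
    intro j _ hne
    rcases (hnn j i).lt_or_eq with h | h
    · exact h
    · exact absurd (by rw [← h, zero_mul]) hne
  rw [hfilter]
  simp_rw [Finset.mul_sum]
  rw [← Finset.sum_sigma (univ.filter (fun j => 0 < A j i)) (fun j => iTrees A j)
    (fun p => A p.1 i * treeWeight A p.2)]
  refine Finset.sum_bij (fun p (_ : p ∈ (univ.filter (fun j => 0 < A j i)).sigma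
    (fun j => iTrees A j)) => insert (p.1, i) p.2) ?_ ?_ ?_ ?_
  · intro p hp
    obtain ⟨hj, hT⟩ := Finset.mem_sigma.1 hp
    exact Finset.mem_filter.2 ⟨Finset.mem_univ _,
      insertJ_mem (Finset.mem_filter.1 hT).2 (Finset.mem_filter.1 hj).2⟩
  · intro p₁ hp₁ p₂ hp₂ heq
    obtain ⟨hj₁, hT₁f⟩ := Finset.mem_sigma.1 hp₁
    obtain ⟨hj₂, hT₂f⟩ := Finset.mem_sigma.1 hp₂
    have hT₁ : IsITree (edgeRel A) p₁.1 p₁.2 := (Finset.mem_filter.1 hT₁f).2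
    have hT₂ : IsITree (edgeRel A) p₂.1 p₂.2 := (Finset.mem_filter.1 hT₂f).2
    have hU := insertJ_mem hT₁ (Finset.mem_filter.1 hj₁).2
    have hkey := keyJ hU.2.1 hU.2.2
    have hpred : ∀ q : (_ : Fin n) × Finset (Fin n × Fin n),
        IsITree (edgeRel A) q.1 q.2 → insert (q.1, i) q.2 = insert (p₁.1, i) p₁.2 →
        ((q.1, i) ∈ insert (p₁.1, i) p₁.2 ∧ ∀ z, ¬ TransGen
          (fun a b => (a, b) ∈ (insert (p₁.1, i) p₁.2).erase (q.1, i)) z z) := by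
      intro q hq hins
      constructor
      · rw [← hins]; exact Finset.mem_insert_self _ _
      · rw [← hins, Finset.erase_insert (hq.2.2.1 i)]
        exact hq.2.2.2
    have h₁ := hpred p₁ hT₁ rfl
    have h₂ := hpred p₂ hT₂ heq.symm
    have hjj : p₁.1 = p₂.1 := by
      obtain ⟨j₀, -, huniq⟩ := hkey
      rw [huniq p₁.1 h₁, huniq p₂.1 h₂]
    obtain ⟨j₁, T₁⟩ := p₁
    obtain ⟨j₂, T₂⟩ := p₂
    simp only at hjj heq hT₁ hT₂
    subst hjj
    have hTT : T₁ = T₂ := by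
      have e₁ : T₁ = (insert (j₁, i) T₁).erase (j₁, i) :=
        (Finset.erase_insert (hT₁.2.2.1 i)).symm
      have e₂ : T₂ = (insert (j₁, i) T₂).erase (j₁, i) :=
        (Finset.erase_insert (hT₂.2.2.1 i)).symm
      rw [e₁, e₂, heq]
    rw [hTT]
  · intro U hU
    obtain ⟨hedge, hfun, hacyc⟩ : IsFunCyc A i U := (Finset.mem_filter.1 hU).2
    obtain ⟨j, ⟨hji, hjac⟩, -⟩ := keyJ hfun hacyc
    refine ⟨⟨j, U.erase (j, i)⟩, ?_, Finset.insert_erase hji⟩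
    refine Finset.mem_sigma.2 ⟨Finset.mem_filter.2 ⟨Finset.mem_univ _, hedge _ hji⟩,
      Finset.mem_filter.2 ⟨Finset.mem_univ _, ?_⟩⟩
    exact eraseJ_tree hedge hfun hji hjac
  · intro p hp
    have hT : IsITree (edgeRel A) p.1 p.2 := (Finset.mem_filter.1 (Finset.mem_sigma.1 hp).2).2
    simp [treeWeight, Finset.prod_insert (hT.2.2.1 i)]

end Matrix

section Exist
open Relation Finset

private def stepsRel {V : Type*} (R : V → V → Prop) : ℕ → V → V → Prop
  | 0 => Eq
  | (m+1) => fun a c => ∃ b, R a b ∧ stepsRel R m b c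

private lemma stepsRel_append {V : Type*} {R : V → V → Prop} :
    ∀ {m : ℕ} {a b c : V}, stepsRel R m a b → R b c → stepsRel R (m+1) a c
  | 0, a, b, c, h, hbc => ⟨c, h ▸ hbc, rfl⟩
  | (m+1), a, b, c, ⟨b', h1, h2⟩, hbc => ⟨b', h1, stepsRel_append h2 hbc⟩

private lemma transGen_stepsRel {V : Type*} {R : V → V → Prop} {a b : V}
    (h : TransGen R a b) : ∃ m, stepsRel R (m+1) a b := by
  induction h with
  | single h => exact ⟨0, _, h, rfl⟩
  | tail hab hbc IH =>
    obtain ⟨m, hm⟩ := IH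
    exact ⟨m + 1, stepsRel_append hm hbc⟩

private lemma exists_itree {n : ℕ} {A : Matrix (Fin n) (Fin n) ℝ}
    (hirr : IrreducibleMat A) (i : Fin n) : ∃ T, IsITree (edgeRel A) i T := by
  have hstep : ∀ j : Fin n, j ≠ i → ∃ m, stepsRel (edgeRel A) (m+1) j i :=
    fun j hj => transGen_stepsRel (hirr j i hj)
  set d : Fin n → ℕ := fun j => if h : j ≠ i then Nat.find (hstep j h) else 0 with hd
  set f : Fin n → Fin n :=
    fun j => if h : j ≠ i then (Nat.find_spec (hstep j h)).choose else i with hfdef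
  set rank : Fin n → ℕ := fun j => if j = i then 0 else d j + 1 with hrk
  have hf : ∀ j (h : j ≠ i), edgeRel A j (f j) ∧
      stepsRel (edgeRel A) (Nat.find (hstep j h)) (f j) i := by
    intro j h
    have hfj : f j = (Nat.find_spec (hstep j h)).choose := dif_pos h
    rw [hfj]
    exact (Nat.find_spec (hstep j h)).choose_spec
  have hrank : ∀ j (h : j ≠ i), rank (f j) < rank j := by
    intro j h
    have hrj : rank j = d j + 1 := by simp [hrk, h]
    by_cases hfi : f j = i
    · simp [hrk, hfi, hrj, h]
    · have hsteps := (hf j h).2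
      have hdj : d j = Nat.find (hstep j h) := by simp [hd, h]
      rcases Nat.eq_zero_or_pos (Nat.find (hstep j h)) with h0 | hpos
      · rw [h0] at hsteps
        exact absurd hsteps hfi
      · obtain ⟨m', hm'⟩ := Nat.exists_eq_succ_of_ne_zero hpos.ne'
        rw [hm'] at hsteps
        have hle : Nat.find (hstep (f j) hfi) ≤ m' := Nat.find_le hsteps
        have : rank (f j) = d (f j) + 1 := by simp [hrk, hfi]
        have hdf : d (f j) = Nat.find (hstep (f j) hfi) := by simp [hd, hfi]
        omega
  refine ⟨(univ.filter (fun j => j ≠ i)).image (fun j => (j, f j)), ?_, ?_, ?_, ?_⟩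
  · rintro ⟨a, b⟩ he
    obtain ⟨j, hj, heq⟩ := Finset.mem_image.1 he
    have hj' : j ≠ i := (Finset.mem_filter.1 hj).2
    injection heq with h1 h2
    subst h1; subst h2
    exact (hf _ hj').1
  · intro j hj
    refine ⟨f j, Finset.mem_image.2 ⟨j, Finset.mem_filter.2 ⟨Finset.mem_univ _, hj⟩, rfl⟩, ?_⟩
    intro k hk
    obtain ⟨j', hj', heq⟩ := Finset.mem_image.1 hk
    have h1 : j' = j := congrArg Prod.fst heq
    have h2 : f j' = k := congrArg Prod.snd heq
    rw [← h2, h1]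
  · intro k hk
    obtain ⟨j', hj', heq⟩ := Finset.mem_image.1 hk
    exact (Finset.mem_filter.1 hj').2 (congrArg Prod.fst heq)
  · have hdec : ∀ a b, TransGen
        (fun a b => (a, b) ∈ (univ.filter (fun j => j ≠ i)).image (fun j => (j, f j))) a b →
        rank b < rank a := by
      intro a b h
      induction h with
      | single h =>
        obtain ⟨j', hj', heq⟩ := Finset.mem_image.1 h
        injection heq with h1 h2
        subst h1; subst h2
        exact hrank _ (Finset.mem_filter.1 hj').2
      | tail hab hbc IH =>
        obtain ⟨j', hj', heq⟩ := Finset.mem_image.1 hbc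
        injection heq with h1 h2
        subst h1; subst h2
        exact lt_trans (hrank _ (Finset.mem_filter.1 hj').2) IH
    intro j hj
    exact lt_irrefl _ (hdec j j hj)

end Exist

/-- Markov Chain Tree Theorem: for an `n × n` irreducible
row-stochastic matrix `A`, the vector `w` with `wᵢ = ∑_{T ∈ 𝒯ᵢ} π(T, A)` satisfies
`Aᵀ w = w` and `w ≠ 0`; consequently `w / (∑ᵢ wᵢ)` is a stationary distribution of
the Markov chain with transition matrix `A`. -/
theorem stmt_0 {n : ℕ} (hn : 0 < n) (A : Matrix (Fin n) (Fin n) ℝ)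
    (hnn : ∀ i j, 0 ≤ A i j) (hrow : ∀ i, ∑ j, A i j = 1)
    (hirr : IrreducibleMat A)
    (w : Fin n → ℝ) (hw : ∀ i, w i = ∑ T ∈ iTrees A i, treeWeight A T) :
    (∀ i, ∑ j, A j i * w j = w i) ∧ w ≠ 0 ∧
      (∀ i, 0 ≤ w i / ∑ k, w k) ∧ (∑ i, w i / ∑ k, w k) = 1 ∧
      (∀ i, ∑ j, A j i * (w j / ∑ k, w k) = w i / ∑ k, w k) := by
  have hpos : ∀ i, 0 < w i := by
    intro i
    rw [hw i]
    obtain ⟨T, hT⟩ := exists_itree hirr i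
    exact Finset.sum_pos (fun T' hT' => treeWeight_pos (Finset.mem_filter.1 hT').2)
      ⟨T, Finset.mem_filter.2 ⟨Finset.mem_univ _, hT⟩⟩
  have h1 : ∀ i, ∑ j, A j i * w j = w i := by
    intro i
    calc ∑ j, A j i * w j
        = ∑ j, A j i * ∑ T ∈ iTrees A j, treeWeight A T := by simp_rw [hw]
      _ = ∑ U ∈ funCyc A i, treeWeight A U := eq2 hnn i
      _ = ∑ T ∈ iTrees A i, treeWeight A T := eq1 hnn hrow i
      _ = w i := (hw i).symm
  have hspos : 0 < ∑ k, w k :=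
    Finset.sum_pos (fun j _ => hpos j) ⟨⟨0, hn⟩, Finset.mem_univ _⟩
  refine ⟨h1, ?_, ?_, ?_, ?_⟩
  · intro h
    exact (hpos ⟨0, hn⟩).ne' (congrFun h ⟨0, hn⟩)
  · intro i
    exact div_nonneg (hpos i).le hspos.le
  · rw [← Finset.sum_div]
    exact div_self hspos.ne'
  · intro i
    simp_rw [← mul_div_assoc]
    rw [← Finset.sum_div, h1 i]
end

section
/- If A is an n×n irreducible matrix with nonnegative real entries, then for each node i ∈ {1,…,n} there exists an i-tree T in D(A) with nonzero weight, i.e., π(T,A) > 0. -/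
open scoped Classical

/-- Auxiliary: `reachN R i j m` means there is a walk of length `m` from `j` to `i`
along `R` (with `m = 0` meaning `j = i`). -/
def reachN {V : Type*} (R : V → V → Prop) (i : V) : V → ℕ → Prop
  | j, 0 => j = i
  | j, (m+1) => ∃ k, R j k ∧ reachN R i k m

lemma reachN_of_transGen {V : Type*} {R : V → V → Prop} {i j : V}
    (h : Relation.TransGen R j i) : ∃ m, reachN R i j m := by
  induction h using Relation.TransGen.head_induction_on with
  | single hr => exact ⟨1, i, hr, rfl⟩
  | head hr _ ihp =>
      obtain ⟨m, hm⟩ := ihp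
      exact ⟨m + 1, _, hr, hm⟩

/-- if `A` is an `n × n` irreducible nonnegative matrix, then for each
node `i` there is an `i`-tree in `D(A)` with nonzero (positive) weight. -/
theorem stmt_2 {n : ℕ} (A : Matrix (Fin n) (Fin n) ℝ)
    (hnn : ∀ i j, 0 ≤ A i j) (hirr : IrreducibleMat A) (i : Fin n) :
    ∃ T : Finset (Fin n × Fin n), IsITree (edgeRel A) i T ∧ 0 < treeWeight A T := by
  classical
  set R := edgeRel A with hR
  -- every vertex reaches `i`
  have hreach : ∀ j : Fin n, ∃ m, reachN R i j m := by
    intro j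
    by_cases hji : j = i
    · exact ⟨0, hji⟩
    · exact reachN_of_transGen (hirr j i hji)
  -- shortest-walk length
  let d : Fin n → ℕ := fun j => Nat.find (hreach j)
  have hd_spec : ∀ j, reachN R i j (d j) := fun j => Nat.find_spec (hreach j)
  have hd_i : d i = 0 := by
    have : reachN R i i 0 := rfl
    exact Nat.le_zero.mp (Nat.find_le this)
  have hd_pos : ∀ j, j ≠ i → 0 < d j := by
    intro j hj
    rcases Nat.eq_zero_or_pos (d j) with h0 | h
    · have := hd_spec j; rw [h0] at this; exact absurd this hj
    · exact h
  -- choose a successor for each `j ≠ i`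
  have hstep : ∀ j, j ≠ i → ∃ k, R j k ∧ d k < d j := by
    intro j hj
    have hpos := hd_pos j hj
    obtain ⟨m, hm⟩ : ∃ m, d j = m + 1 := ⟨d j - 1, (Nat.succ_pred_eq_of_pos hpos).symm⟩
    have hs := hd_spec j
    rw [hm] at hs
    obtain ⟨k, hRk, hk⟩ := hs
    exact ⟨k, hRk, lt_of_le_of_lt (Nat.find_le hk) (by omega)⟩
  let f : Fin n → Fin n := fun j => if h : j ≠ i then Classical.choose (hstep j h) else j
  have hf : ∀ j (h : j ≠ i), R j (f j) ∧ d (f j) < d j := by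
    intro j h
    simp only [f, dif_pos h]
    exact Classical.choose_spec (hstep j h)
  -- the tree
  set T : Finset (Fin n × Fin n) :=
    (Finset.univ.filter (· ≠ i)).image (fun j => (j, f j)) with hT
  have hmem : ∀ a b : Fin n, (a, b) ∈ T ↔ a ≠ i ∧ b = f a := by
    intro a b
    simp only [hT, Finset.mem_image, Finset.mem_filter, Finset.mem_univ, true_and]
    constructor
    · rintro ⟨j, hj, heq⟩
      have h1 : j = a := congrArg Prod.fst heq
      have h2 : f j = b := congrArg Prod.snd heq
      subst h1
      exact ⟨hj, h2.symm⟩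
    · rintro ⟨h1, rfl⟩
      exact ⟨a, h1, rfl⟩
  have hedge : ∀ e ∈ T, R e.1 e.2 := by
    rintro ⟨a, b⟩ he
    obtain ⟨h1, rfl⟩ := (hmem a b).mp he
    exact (hf a h1).1
  refine ⟨T, ⟨hedge, ?_, ?_, ?_⟩, ?_⟩
  · intro j hj
    refine ⟨f j, (hmem j (f j)).mpr ⟨hj, rfl⟩, ?_⟩
    intro k hk
    exact ((hmem j k).mp hk).2
  · intro k hk
    exact ((hmem i k).mp hk).1 rfl
  · -- acyclicity: edges strictly decrease `d`
    have hdec : ∀ a b : Fin n, (a, b) ∈ T → d b < d a := by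
      intro a b hab
      obtain ⟨h1, rfl⟩ := (hmem a b).mp hab
      exact (hf a h1).2
    intro j hcyc
    have : ∀ a b : Fin n, Relation.TransGen (fun a b => (a, b) ∈ T) a b → d b < d a := by
      intro a b h
      induction h with
      | single h => exact hdec _ _ h
      | tail _ h ih => exact lt_trans (hdec _ _ h) ih
    exact lt_irrefl _ (this j j hcyc)
  · -- positive weight
    apply Finset.prod_pos
    rintro ⟨a, b⟩ he
    exact hedge (a, b) he
end

section
/- Let A be an n×n irreducible max-stochastic matrix with nonnegative real entries. Let w be the maximal RST vector of A, i.e., w_i = max_{T ∈ 𝒯_i} π(T,A). Then Aᵀ ⊗ w = w, that is, max_{1≤j≤n} a_{ji} w_j = w_i for every i ∈ {1,…,n}. -/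
open scoped Classical

open Relation

private lemma myL' {α} {R : α → α → Prop} {p q a b : α}
    (h : ReflTransGen (fun x y => R x y ∨ (x = p ∧ y = q)) a b) :
    ReflTransGen R a b ∨ ReflTransGen R a p := by
  induction h using ReflTransGen.head_induction_on with
  | refl => exact Or.inl .refl
  | head hstep _ ih =>
    rcases hstep with h1 | ⟨rfl, rfl⟩
    · rcases ih with h2 | h2
      · exact Or.inl (h2.head h1)
      · exact Or.inr (h2.head h1)
    · exact Or.inr .refl

private lemma myL {α} {R : α → α → Prop} {p q a b : α}
    (h : TransGen (fun x y => R x y ∨ (x = p ∧ y = q)) a b) :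
    TransGen R a b ∨ (ReflTransGen (fun x y => R x y ∨ (x = p ∧ y = q)) a p ∧
      ReflTransGen (fun x y => R x y ∨ (x = p ∧ y = q)) q b) := by
  induction h using TransGen.head_induction_on with
  | single hstep =>
    rcases hstep with h1 | ⟨rfl, rfl⟩
    · exact Or.inl (.single h1)
    · exact Or.inr ⟨.refl, .refl⟩
  | head hstep ht ihr =>
    rcases hstep with h1 | ⟨rfl, rfl⟩
    · rcases ihr with h2 | ⟨h2, h3⟩
      · exact Or.inl (h2.head h1)
      · exact Or.inr ⟨h2.head (Or.inl h1), h3⟩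
    · exact Or.inr ⟨.refl, ht.to_reflTransGen⟩

private lemma acyclic_insert {α} {R : α → α → Prop} {p q : α}
    (hR : ∀ v, ¬ TransGen R v v) (hqp : ¬ ReflTransGen R q p) (v : α) :
    ¬ TransGen (fun x y => R x y ∨ (x = p ∧ y = q)) v v := by
  intro h
  rcases myL h with h1 | ⟨h1, h2⟩
  · exact hR v h1
  · rcases myL' (h2.trans h1) with h3 | h3 <;> exact hqp h3

private lemma chain_comp {α} {R : α → α → Prop}
    (hfun : ∀ ⦃x y z⦄, R x y → R x z → y = z) {a b : α}
    (hab : ReflTransGen R a b) :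
    ∀ c, ReflTransGen R a c → ReflTransGen R b c ∨ ReflTransGen R c b := by
  induction hab using ReflTransGen.head_induction_on with
  | refl => exact fun c hac => Or.inl hac
  | head hstep hrest ih =>
    intro c hac
    rcases hac.cases_head with rfl | ⟨e, he, hec⟩
    · exact Or.inr (ReflTransGen.head hstep hrest)
    · cases hfun hstep he
      exact ih c hec

private lemma reach_root {n : ℕ} {T : Finset (Fin n × Fin n)} {i : Fin n}
    (hT2 : ∀ j : Fin n, j ≠ i → ∃! k : Fin n, (j, k) ∈ T)
    (hT4 : ∀ j : Fin n, ¬ TransGen (fun a b : Fin n => (a, b) ∈ T) j j) :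
    ∀ k : Fin n, k ≠ i →
      ∃ j', (j', i) ∈ T ∧ ReflTransGen (fun a b : Fin n => (a, b) ∈ T) k j' := by
  haveI h1 : IsTrans (Fin n) (fun a b => TransGen (fun x y : Fin n => (x,y) ∈ T) b a) :=
    ⟨fun a b c hab hbc => hbc.trans hab⟩
  haveI h2 : IsIrrefl (Fin n) (fun a b => TransGen (fun x y : Fin n => (x,y) ∈ T) b a) :=
    ⟨fun a h => hT4 a h⟩
  have hwf : WellFounded (fun a b : Fin n => TransGen (fun x y : Fin n => (x,y) ∈ T) b a) :=
    Finite.wellFounded_of_trans_of_irrefl _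
  intro k
  induction k using hwf.induction with
  | _ k ih =>
    intro hk
    obtain ⟨m, hm, _⟩ := hT2 k hk
    by_cases hmi : m = i
    · exact ⟨k, hmi ▸ hm, .refl⟩
    · obtain ⟨j', hj1, hj2⟩ := ih m (TransGen.single hm) hmi
      exact ⟨j', hj1, hj2.head hm⟩


open Relation

section
variable {n : ℕ} (A : Matrix (Fin n) (Fin n) ℝ)

private lemma tw_nonneg (hnn : ∀ i j, 0 ≤ A i j) (T : Finset (Fin n × Fin n)) :
    0 ≤ treeWeight A T :=
  Finset.prod_nonneg (fun e _ => hnn e.1 e.2)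

-- Upper bound: for every j, A j i * w j ≤ w i
private lemma upper_aux
    (hnn : ∀ i j, 0 ≤ A i j) (hms : MaxStochastic A)
    (w : Fin n → ℝ) (hw : IsMaxRSTVector A w) (i j : Fin n) :
    A j i * w j ≤ w i := by
  obtain ⟨Ti, hTi, hwi⟩ := (hw i).1
  obtain ⟨Tj, hTj, hwj⟩ := (hw j).1
  have hwi0 : 0 ≤ w i := hwi ▸ tw_nonneg A hnn Ti
  have hwj0 : 0 ≤ w j := hwj ▸ tw_nonneg A hnn Tj
  by_cases hji : j = i
  · subst hji
    have h1 : A j j ≤ 1 := (hms j).2 ⟨j, rfl⟩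
    nlinarith [hnn j j]
  by_cases hA : 0 < A j i
  swap
  · have h0 : A j i = 0 := le_antisymm (le_of_not_gt hA) (hnn j i)
    rw [h0, zero_mul]; exact hwi0
  have hij : i ≠ j := fun h => hji h.symm
  obtain ⟨hTj1, hTj2, hTj3, hTj4⟩ := hTj
  obtain ⟨m, hm, hmu⟩ := hTj2 i hij
  set E : Finset (Fin n × Fin n) := Tj.erase (i, m) with hE
  set T' : Finset (Fin n × Fin n) := insert (j, i) E with hT'def
  have hnoE : ∀ y : Fin n, (i, y) ∉ E := by
    intro y hy
    have h1 : (i, y) ∈ Tj := Finset.mem_of_mem_erase hy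
    have h2 : y = m := hmu y h1
    subst h2
    exact (Finset.notMem_erase _ _) hy
  -- T' is an i-tree
  have hT'tree : IsITree (edgeRel A) i T' := by
    refine ⟨?_, ?_, ?_, ?_⟩
    · intro e he
      rcases Finset.mem_insert.1 he with rfl | he'
      · exact hA
      · exact hTj1 e (Finset.mem_of_mem_erase he')
    · intro x hx
      by_cases hxj : x = j
      · subst hxj
        refine ⟨i, Finset.mem_insert_self _ _, ?_⟩
        intro y hy
        rcases Finset.mem_insert.1 hy with h | h
        · exact (Prod.mk.injEq _ _ _ _ ▸ h).2
        · exact absurd (Finset.mem_of_mem_erase h) (hTj3 y)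
      · obtain ⟨y, hy, hyu⟩ := hTj2 x hxj
        have hy' : (x, y) ∈ T' := by
          refine Finset.mem_insert_of_mem (Finset.mem_erase.2 ⟨?_, hy⟩)
          intro h
          exact hx (Prod.mk.injEq _ _ _ _ ▸ h).1
        refine ⟨y, hy', ?_⟩
        intro z hz
        rcases Finset.mem_insert.1 hz with h | h
        · exact absurd (Prod.mk.injEq _ _ _ _ ▸ h).1 hxj
        · exact hyu z (Finset.mem_of_mem_erase h)
    · intro y hy
      rcases Finset.mem_insert.1 hy with h | h
      · exact hij (Prod.mk.injEq _ _ _ _ ▸ h).1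
      · exact hnoE y h
    · have hrel : (fun a b : Fin n => (a, b) ∈ T')
          = fun a b => (a, b) ∈ E ∨ (a = j ∧ b = i) := by
        funext a b
        apply propext
        simp only [hT'def, Finset.mem_insert, Prod.mk.injEq]
        tauto
      rw [hrel]
      apply acyclic_insert
      · intro v hv
        exact hTj4 v (TransGen.mono (fun a b h => Finset.mem_of_mem_erase h) _ _ hv)
      · intro h
        rcases h.cases_head with h' | ⟨e, he, _⟩
        · exact hij h'
        · exact hnoE e he
  -- weight comparison
  have hji' : (j, i) ∉ E := fun h => hTj3 i (Finset.mem_of_mem_erase h)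
  have hwT' : treeWeight A T' = A j i * treeWeight A E := by
    rw [hT'def, treeWeight, Finset.prod_insert hji']; rfl
  have hsplit : treeWeight A E * A i m = w j := by
    rw [hwj, treeWeight, treeWeight, hE]
    exact Finset.prod_erase_mul _ _ hm
  have hE0 : 0 ≤ treeWeight A E := tw_nonneg A hnn E
  have hm1 : A i m ≤ 1 := (hms i).2 ⟨m, rfl⟩
  have hwjE : w j ≤ treeWeight A E := by nlinarith
  have hle : treeWeight A T' ≤ w i := (hw i).2 ⟨T', hT'tree, rfl⟩
  calc A j i * w j ≤ A j i * treeWeight A E :=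
        mul_le_mul_of_nonneg_left hwjE (hnn j i)
    _ = treeWeight A T' := hwT'.symm
    _ ≤ w i := hle

end

section
variable {n : ℕ}

private lemma mem_aux (A : Matrix (Fin n) (Fin n) ℝ)
    (hnn : ∀ i j, 0 ≤ A i j) (hms : MaxStochastic A)
    (w : Fin n → ℝ) (hw : IsMaxRSTVector A w) (i : Fin n) :
    ∃ j : Fin n, A j i * w j = w i := by
  have hub : ∀ j, A j i * w j ≤ w i := fun j => upper_aux A hnn hms w hw i j
  obtain ⟨k, hk⟩ := (hms i).1
  by_cases hki : k = i
  · subst hki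
    exact ⟨k, by rw [hk, one_mul]⟩
  obtain ⟨T, hT, hwiT⟩ := (hw i).1
  obtain ⟨hT1, hT2, hT3, hT4⟩ := hT
  -- unique out-edges in T
  have hfun : ∀ ⦃x y z : Fin n⦄, (x, y) ∈ T → (x, z) ∈ T → y = z := by
    intro x y z hy hz
    by_cases hx : x = i
    · subst hx; exact absurd hy (hT3 y)
    · obtain ⟨u, _, hu⟩ := hT2 x hx
      rw [hu y hy, hu z hz]
  obtain ⟨j', hj'T, hchain⟩ := reach_root hT2 hT4 k hki
  have hj'i : j' ≠ i := by
    intro h; subst h; exact hT3 j' hj'T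
  set E : Finset (Fin n × Fin n) := T.erase (j', i) with hE
  set S' : Finset (Fin n × Fin n) := insert (i, k) E with hS'def
  have hAik : 0 < A i k := by rw [hk]; norm_num
  -- no chain in E from k to i
  have hqp : ¬ ReflTransGen (fun a b : Fin n => (a, b) ∈ E) k i := by
    intro h
    rcases h.cases_tail with h' | ⟨x, hkx, hxi⟩
    · exact hki h'.symm
    · have hxiT : (x, i) ∈ T := Finset.mem_of_mem_erase hxi
      have hxj' : x ≠ j' := by
        intro h'; subst h'
        exact (Finset.notMem_erase _ _) hxi
      have hkxT : ReflTransGen (fun a b : Fin n => (a, b) ∈ T) k x :=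
        ReflTransGen.mono (fun a b h' => Finset.mem_of_mem_erase h') _ _ hkx
      rcases chain_comp hfun hkxT j' hchain with h1 | h1
      · rcases h1.cases_head with h' | ⟨e, he, hej⟩
        · exact hxj' h'
        · cases hfun he hxiT
          rcases hej.cases_head with h' | ⟨e', he', _⟩
          · exact hj'i h'.symm
          · exact hT3 e' he'
      · rcases h1.cases_head with h' | ⟨e, he, hej⟩
        · exact hxj' h'.symm
        · cases hfun he hj'T
          rcases hej.cases_head with h' | ⟨e', he', _⟩
          · subst h'; exact hT3 i hxiT
          · exact hT3 e' he'
  -- S' is a j'-tree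
  have hS'tree : IsITree (edgeRel A) j' S' := by
    refine ⟨?_, ?_, ?_, ?_⟩
    · intro e he
      rcases Finset.mem_insert.1 he with rfl | he'
      · exact hAik
      · exact hT1 e (Finset.mem_of_mem_erase he')
    · intro x hx
      by_cases hxi : x = i
      · subst hxi
        refine ⟨k, Finset.mem_insert_self _ _, ?_⟩
        intro y hy
        rcases Finset.mem_insert.1 hy with h | h
        · exact (Prod.mk.injEq _ _ _ _ ▸ h).2
        · exact absurd (Finset.mem_of_mem_erase h) (hT3 y)
      · obtain ⟨y, hy, hyu⟩ := hT2 x hxi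
        have hyE : (x, y) ∈ S' := by
          refine Finset.mem_insert_of_mem (Finset.mem_erase.2 ⟨?_, hy⟩)
          intro h
          have : y = i := (Prod.mk.injEq _ _ _ _ ▸ h).2
          exact hx (Prod.mk.injEq _ _ _ _ ▸ h).1
        refine ⟨y, hyE, ?_⟩
        intro z hz
        rcases Finset.mem_insert.1 hz with h | h
        · exact absurd (Prod.mk.injEq _ _ _ _ ▸ h).1 hxi
        · exact hyu z (Finset.mem_of_mem_erase h)
    · intro y hy
      rcases Finset.mem_insert.1 hy with h | h
      · exact hj'i (Prod.mk.injEq _ _ _ _ ▸ h).1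
      · have h1 : (j', y) ∈ T := Finset.mem_of_mem_erase h
        have h2 : y = i := hfun h1 hj'T
        subst h2
        exact (Finset.notMem_erase _ _) h
    · have hrel : (fun a b : Fin n => (a, b) ∈ S')
          = fun a b => (a, b) ∈ E ∨ (a = i ∧ b = k) := by
        funext a b
        apply propext
        simp only [hS'def, Finset.mem_insert, Prod.mk.injEq]
        tauto
      rw [hrel]
      apply acyclic_insert
      · intro v hv
        exact hT4 v (TransGen.mono (fun a b h => Finset.mem_of_mem_erase h) _ _ hv)
      · exact hqp
  -- weight bookkeeping
  have hikE : (i, k) ∉ E := fun h => hT3 k (Finset.mem_of_mem_erase h)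
  have hwS' : treeWeight A S' = treeWeight A E := by
    rw [hS'def, treeWeight, Finset.prod_insert hikE]
    show A i k * _ = _
    rw [hk, one_mul]; rfl
  have hsplit : treeWeight A E * A j' i = w i := by
    rw [hwiT, treeWeight, treeWeight, hE]
    exact Finset.prod_erase_mul _ _ hj'T
  have hS'le : treeWeight A S' ≤ w j' := (hw j').2 ⟨S', hS'tree, rfl⟩
  have hAji : 0 < A j' i := hT1 _ hj'T
  have hge : w i ≤ A j' i * w j' := by
    calc w i = treeWeight A E * A j' i := hsplit.symm
      _ = A j' i * treeWeight A S' := by rw [hwS']; ring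
      _ ≤ A j' i * w j' := mul_le_mul_of_nonneg_left hS'le (hnn j' i)
  exact ⟨j', le_antisymm (hub j') hge⟩

end

/-- Markov Chain Tree Theorem in the max algebra: if `A` is an
`n × n` irreducible max-stochastic matrix and `w` is its maximal RST vector
(`wᵢ = max_{T ∈ 𝒯ᵢ} π(T, A)`), then `Aᵀ ⊗ w = w`, i.e. `max_j a_{ji} w_j = w_i`
for every `i`. -/
theorem stmt_4 {n : ℕ} (A : Matrix (Fin n) (Fin n) ℝ)
    (hnn : ∀ i j, 0 ≤ A i j) (hirr : IrreducibleMat A) (hms : MaxStochastic A)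
    (w : Fin n → ℝ) (hw : IsMaxRSTVector A w) :
    ∀ i : Fin n, IsGreatest (Set.range fun j => A j i * w j) (w i) := by
  intro i
  obtain ⟨j, hj⟩ := mem_aux A hnn hms w hw i
  refine ⟨⟨j, hj⟩, ?_⟩
  rintro x ⟨j', rfl⟩
  exact upper_aux A hnn hms w hw i j'
end

section
/- Let A be an n×n max-stochastic matrix with nonnegative real entries. Then there exists an integer P₀ and a family of matrices A⁽ᵖ⁾ (p ≥ P₀), each p-stochastic, such that A⁽ᵖ⁾ → A entrywise as p → ∞ and w⁽ᵖ⁾(A⁽ᵖ⁾) → wᵐᵃˣ(A) entrywise as p → ∞, where w⁽ᵖ⁾(A⁽ᵖ⁾) is the p-RST vector of A⁽ᵖ⁾ and wᵐᵃˣ(A) is the maximal RST vector of A. -/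
open scoped Classical

/-- The maximal RST vector of `A`: `wᵢᵐᵃˣ = max_{T ∈ 𝒯ᵢ} π(T, A)`. -/
noncomputable def wmax {n : ℕ} (A : Matrix (Fin n) (Fin n) ℝ) (i : Fin n) : ℝ :=
  sSup {x | ∃ T, IsITree (edgeRel A) i T ∧ x = treeWeight A T}

/-- The `p`-RST vector of `A`: `wᵢ⁽ᵖ⁾ = (∑_{T ∈ 𝒯ᵢ} π(T, A)ᵖ)^{1/p}`. -/
noncomputable def wp {n : ℕ} (A : Matrix (Fin n) (Fin n) ℝ) (p : ℕ) (i : Fin n) : ℝ :=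
  (∑ T ∈ iTrees A i, treeWeight A T ^ (p : ℝ)) ^ ((p : ℝ)⁻¹)

section AuxLemmas

open Filter Topology

lemma aux_rpow_inv_tendsto {c : ℝ} (hc : 0 < c) :
    Tendsto (fun p : ℕ => c ^ ((p : ℝ)⁻¹)) atTop (𝓝 1) := by
  have h1 : Tendsto (fun p : ℕ => ((p : ℝ)⁻¹)) atTop (𝓝 0) :=
    tendsto_inv_atTop_zero.comp tendsto_natCast_atTop_atTop
  have h2 : Tendsto (fun p : ℕ => Real.exp (Real.log c * (p : ℝ)⁻¹)) atTop (𝓝 1) := by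
    have h0 : Tendsto (fun p : ℕ => Real.log c * (p : ℝ)⁻¹) atTop (𝓝 0) := by
      simpa using h1.const_mul (Real.log c)
    simpa [Function.comp_def] using (Real.continuous_exp.tendsto 0).comp h0
  refine h2.congr fun p => ?_
  rw [Real.rpow_def_of_pos hc]

lemma aux_pnorm_tendsto {ι : Type*} {s : Finset ι} (hs : s.Nonempty) (f : ι → ℝ)
    (hf : ∀ t ∈ s, 0 ≤ f t) :
    Tendsto (fun p : ℕ => (∑ t ∈ s, f t ^ (p : ℝ)) ^ ((p : ℝ)⁻¹)) atTop
      (𝓝 (s.sup' hs f)) := by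
  set M := s.sup' hs f with hM
  obtain ⟨t₀, ht₀, hMt₀⟩ := Finset.exists_mem_eq_sup' hs f
  have hMt : M = f t₀ := hMt₀
  have hM0 : 0 ≤ M := hMt ▸ hf t₀ ht₀
  have hle : ∀ t ∈ s, f t ≤ M := fun t ht => Finset.le_sup' f ht
  have hcard : (0 : ℝ) < (s.card : ℝ) := by
    exact_mod_cast Finset.card_pos.mpr hs
  refine tendsto_of_tendsto_of_tendsto_of_le_of_le' (g := fun _ => M)
    (h := fun p : ℕ => (s.card : ℝ) ^ ((p : ℝ)⁻¹) * M)
    tendsto_const_nhds ?_ ?_ ?_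
  · simpa using (aux_rpow_inv_tendsto hcard).mul_const M
  · filter_upwards [eventually_ge_atTop 1] with p hp
    have hp0 : p ≠ 0 := by omega
    have h1 : M ^ (p : ℝ) ≤ ∑ t ∈ s, f t ^ (p : ℝ) := by
      rw [hMt]
      exact Finset.single_le_sum (f := fun t => f t ^ (p : ℝ))
        (fun t ht => Real.rpow_nonneg (hf t ht) _) ht₀
    calc M = (M ^ (p : ℝ)) ^ ((p : ℝ)⁻¹) := by
            rw [Real.rpow_natCast, Real.pow_rpow_inv_natCast hM0 hp0]
      _ ≤ _ := Real.rpow_le_rpow (Real.rpow_nonneg hM0 _) h1 (by positivity)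
  · filter_upwards [eventually_ge_atTop 1] with p hp
    have hp0 : p ≠ 0 := by omega
    have h2 : ∑ t ∈ s, f t ^ (p : ℝ) ≤ (s.card : ℝ) * M ^ (p : ℝ) := by
      have := Finset.sum_le_card_nsmul s (fun t => f t ^ (p : ℝ)) (M ^ (p : ℝ))
        (fun t ht => Real.rpow_le_rpow (hf t ht) (hle t ht) (by positivity))
      simpa [nsmul_eq_mul] using this
    calc (∑ t ∈ s, f t ^ (p : ℝ)) ^ ((p : ℝ)⁻¹)
        ≤ ((s.card : ℝ) * M ^ (p : ℝ)) ^ ((p : ℝ)⁻¹) :=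
          Real.rpow_le_rpow (Finset.sum_nonneg fun t ht => Real.rpow_nonneg (hf t ht) _)
            h2 (by positivity)
      _ = (s.card : ℝ) ^ ((p : ℝ)⁻¹) * M := by
          rw [Real.mul_rpow hcard.le (Real.rpow_nonneg hM0 _),
            ← Real.rpow_mul hM0, mul_inv_cancel₀ (by exact_mod_cast hp0), Real.rpow_one]

lemma aux_tree_prod_fst {V : Type*} [Fintype V] [DecidableEq V] {R : V → V → Prop} {i : V}
    {T : Finset (V × V)} (hT : IsITree R i T) (f : V → ℝ) :
    ∏ e ∈ T, f e.1 = ∏ j ∈ Finset.univ.erase i, f j := by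
  obtain ⟨-, huniq, hno, -⟩ := hT
  refine Finset.prod_bij (fun e _ => e.1) ?_ ?_ ?_ ?_
  · intro e he
    refine Finset.mem_erase.mpr ⟨?_, Finset.mem_univ _⟩
    rintro rfl
    exact hno e.2 (by simpa using he)
  · intro e₁ h₁ e₂ h₂ h
    have hne : e₁.1 ≠ i := by
      rintro hni
      exact hno e₁.2 (by rw [← hni]; simpa using h₁)
    obtain ⟨k, -, hk⟩ := huniq e₁.1 hne
    have h1 : e₁.2 = k := hk e₁.2 (by simpa using h₁)
    have h2 : e₂.2 = k := hk e₂.2 (by show (e₁.1, e₂.2) ∈ T; rw [h]; simpa using h₂)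
    exact Prod.ext h (h1.trans h2.symm)
  · intro j hj
    obtain ⟨k, hk, -⟩ := huniq j (Finset.mem_erase.mp hj).1
    exact ⟨(j, k), hk, rfl⟩
  · intro e he; rfl

end AuxLemmas


/-- dequantisation: for a max-stochastic matrix `A` there are an
integer `P₀` and `p`-stochastic matrices `A⁽ᵖ⁾` for `p ≥ P₀` with `A⁽ᵖ⁾ → A` and
`w⁽ᵖ⁾(A⁽ᵖ⁾) → wᵐᵃˣ(A)` entrywise as `p → ∞`. -/
theorem stmt_5 {n : ℕ} (A : Matrix (Fin n) (Fin n) ℝ)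
    (hnn : ∀ i j, 0 ≤ A i j) (hms : MaxStochastic A) :
    ∃ P₀ : ℕ, ∃ B : ℕ → Matrix (Fin n) (Fin n) ℝ,
      (∀ p ≥ P₀, (∀ i j, 0 ≤ B p i j) ∧ PStochastic (B p) p) ∧
      (∀ i j, Filter.Tendsto (fun p => B p i j) Filter.atTop (nhds (A i j))) ∧
      (∀ i, Filter.Tendsto (fun p => wp (B p) p i) Filter.atTop (nhds (wmax A i))) := by
  classical
  open Filter Topology in
  set S : ℕ → Fin n → ℝ := fun p i => ∑ j, A i j ^ p with hSdef
  have hS1 : ∀ (p : ℕ) (i : Fin n), 1 ≤ S p i := by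
    intro p i
    obtain ⟨k, hk⟩ := (hms i).1
    calc (1 : ℝ) = A i k ^ p := by rw [hk, one_pow]
      _ ≤ S p i := Finset.single_le_sum (f := fun j => A i j ^ p)
          (fun j _ => pow_nonneg (hnn i j) p) (Finset.mem_univ k)
  have hSpos : ∀ (p : ℕ) (i : Fin n), 0 < S p i :=
    fun p i => lt_of_lt_of_le one_pos (hS1 p i)
  have hSn : ∀ (p : ℕ) (i : Fin n), S p i ≤ n := by
    intro p i
    have := Finset.sum_le_card_nsmul Finset.univ (fun j => A i j ^ p) 1
      (fun j _ => pow_le_one₀ (hnn i j) ((hms i).2 ⟨j, rfl⟩))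
    simpa [nsmul_eq_mul] using this
  set s : ℕ → Fin n → ℝ := fun p i => (S p i) ^ ((p : ℝ)⁻¹) with hsdef
  have hs1 : ∀ (p : ℕ) (i : Fin n), 1 ≤ s p i := by
    intro p i
    calc (1 : ℝ) = 1 ^ ((p : ℝ)⁻¹) := (Real.one_rpow _).symm
      _ ≤ s p i := Real.rpow_le_rpow zero_le_one (hS1 p i) (by positivity)
  have hspos : ∀ (p : ℕ) (i : Fin n), 0 < s p i :=
    fun p i => lt_of_lt_of_le one_pos (hs1 p i)
  have hstend : ∀ i : Fin n, Tendsto (fun p => s p i) atTop (𝓝 1) := by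
    intro i
    have hn : (0 : ℝ) < n := by exact_mod_cast i.pos
    refine tendsto_of_tendsto_of_tendsto_of_le_of_le (g := fun _ => (1 : ℝ))
      (h := fun p : ℕ => (n : ℝ) ^ ((p : ℝ)⁻¹)) tendsto_const_nhds
      (aux_rpow_inv_tendsto hn) (fun p => hs1 p i)
      (fun p => Real.rpow_le_rpow (hSpos p i).le (hSn p i) (by positivity))
  refine ⟨1, fun p i j => A i j / s p i, ?_, ?_, ?_⟩
  · intro p hp
    have hp0 : p ≠ 0 := by omega
    refine ⟨fun i j => div_nonneg (hnn i j) (hspos p i).le, fun i => ?_⟩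
    have hsp : (s p i) ^ p = S p i := Real.rpow_inv_natCast_pow (hSpos p i).le hp0
    calc ∑ j, (A i j / s p i) ^ p = (∑ j, A i j ^ p) / S p i := by
          simp only [div_pow, hsp, Finset.sum_div]
      _ = 1 := div_self (hSpos p i).ne'
  · intro i j
    have := (tendsto_const_nhds (x := A i j) (f := atTop (α := ℕ))).div (hstend i) one_ne_zero
    simpa [Pi.div_def] using this
  · intro i
    have hrel : ∀ p : ℕ, 1 ≤ p →
        edgeRel (fun i j => A i j / s p i : Matrix (Fin n) (Fin n) ℝ) = edgeRel A := by
      intro p hp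
      funext a b
      apply propext
      show 0 < A a b / s p a ↔ 0 < A a b
      constructor
      · intro h
        have := mul_pos h (hspos p a)
        rwa [div_mul_cancel₀ _ (hspos p a).ne'] at this
      · intro h; exact div_pos h (hspos p a)
    have htrees : ∀ p : ℕ, 1 ≤ p →
        iTrees (fun i j => A i j / s p i : Matrix (Fin n) (Fin n) ℝ) i = iTrees A i := by
      intro p hp
      unfold iTrees
      rw [hrel p hp]
    set C : ℕ → ℝ := fun p => ∏ j ∈ Finset.univ.erase i, s p j with hCdef
    have hCpos : ∀ p, 0 < C p :=
      fun p => Finset.prod_pos (fun j _ => hspos p j)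
    have hCtend : Tendsto C atTop (𝓝 1) := by
      have := tendsto_finset_prod (f := fun j (p : ℕ) => s p j) (a := fun _ => (1 : ℝ))
        (Finset.univ.erase i) (fun j _ => hstend j)
      simpa using this
    have hwB : ∀ p : ℕ, 1 ≤ p → ∀ T ∈ iTrees A i,
        treeWeight (fun i j => A i j / s p i : Matrix (Fin n) (Fin n) ℝ) T
          = treeWeight A T / C p := by
      intro p hp T hT
      have hIT : IsITree (edgeRel A) i T := (Finset.mem_filter.mp hT).2
      show ∏ e ∈ T, (A e.1 e.2 / s p e.1) = treeWeight A T / C p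
      rw [Finset.prod_div_distrib]
      rw [aux_tree_prod_fst hIT (s p)]
      rfl
    have hwnn : ∀ T, 0 ≤ treeWeight A T :=
      fun T => Finset.prod_nonneg (fun e _ => hnn e.1 e.2)
    rcases (iTrees A i).eq_empty_or_nonempty with hemp | hne
    · -- empty case
      have hset : {x | ∃ T, IsITree (edgeRel A) i T ∧ x = treeWeight A T} = ∅ := by
        ext x
        simp only [Set.mem_setOf_eq, Set.mem_empty_iff_false, iff_false]
        rintro ⟨T, hT, -⟩
        have : T ∈ iTrees A i := Finset.mem_filter.mpr ⟨Finset.mem_univ _, hT⟩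
        rw [hemp] at this
        exact absurd this (Finset.notMem_empty T)
      have hwmax : wmax A i = 0 := by rw [wmax, hset, Real.sSup_empty]
      rw [hwmax]
      refine Tendsto.congr' ?_ (tendsto_const_nhds (x := (0:ℝ)))
      filter_upwards [eventually_ge_atTop 1] with p hp
      have hp0 : ((p : ℝ))⁻¹ ≠ 0 := by
        have : (p : ℝ) ≠ 0 := by exact_mod_cast (by omega : p ≠ 0)
        simpa using this
      simp only [wp]
      rw [htrees p hp, hemp]
      simp [Real.zero_rpow hp0]
    · -- nonempty case
      set M := (iTrees A i).sup' hne (treeWeight A) with hMdef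
      obtain ⟨T₀, hT₀, hMT₀⟩ := Finset.exists_mem_eq_sup' hne (treeWeight A)
      have hMeq : M = treeWeight A T₀ := hMT₀
      have hwmax : wmax A i = M := by
        rw [wmax]
        apply IsGreatest.csSup_eq
        constructor
        · exact ⟨T₀, (Finset.mem_filter.mp hT₀).2, hMeq⟩
        · rintro x ⟨T, hT, rfl⟩
          exact Finset.le_sup' (treeWeight A) (Finset.mem_filter.mpr ⟨Finset.mem_univ _, hT⟩)
      rw [hwmax]
      have hF : Tendsto (fun p : ℕ =>
          (∑ T ∈ iTrees A i, treeWeight A T ^ (p : ℝ)) ^ ((p : ℝ)⁻¹)) atTop (𝓝 M) :=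
        aux_pnorm_tendsto hne (treeWeight A) (fun T _ => hwnn T)
      have hFC : Tendsto (fun p : ℕ =>
          (∑ T ∈ iTrees A i, treeWeight A T ^ (p : ℝ)) ^ ((p : ℝ)⁻¹) / C p) atTop (𝓝 M) := by
        have := hF.div hCtend one_ne_zero
        simpa [Pi.div_def] using this
      refine Tendsto.congr' ?_ hFC
      filter_upwards [eventually_ge_atTop 1] with p hp
      have hp0 : (p : ℝ) ≠ 0 := by exact_mod_cast (by omega : p ≠ 0)
      simp only [wp]
      rw [htrees p hp]
      have hsum : ∑ T ∈ iTrees A i,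
          treeWeight (fun i j => A i j / s p i : Matrix (Fin n) (Fin n) ℝ) T ^ (p : ℝ)
          = (∑ T ∈ iTrees A i, treeWeight A T ^ (p : ℝ)) / C p ^ (p : ℝ) := by
        rw [Finset.sum_div]
        refine Finset.sum_congr rfl fun T hT => ?_
        rw [hwB p hp T hT, Real.div_rpow (hwnn T) (hCpos p).le]
      rw [hsum, Real.div_rpow (Finset.sum_nonneg fun T _ => Real.rpow_nonneg (hwnn T) _)
        (Real.rpow_nonneg (hCpos p).le _), ← Real.rpow_mul (hCpos p).le,
        mul_inv_cancel₀ hp0, Real.rpow_one]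
end

section
/- Let A be an n×n max-stochastic matrix with nonnegative real entries. Then there exists an integer P₀ such that for every p ≥ P₀ there is an n×n matrix A⁽ᵖ⁾ which is p-stochastic, has the same zero pattern as A (a⁽ᵖ⁾_{ij} > 0 iff a_{ij} > 0), satisfies a⁽ᵖ⁾_{ij} ≤ a_{ij} for all i,j, and max_{i,j}(a_{ij} − a⁽ᵖ⁾_{ij}) → 0 as p → ∞. -/
open scoped Classical

/-- for a max-stochastic matrix `A` there is an integer `P₀` such
that for every `p ≥ P₀` there is a `p`-stochastic matrix `A⁽ᵖ⁾` with the same zero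
pattern as `A`, with `a⁽ᵖ⁾ᵢⱼ ≤ aᵢⱼ` everywhere, and `max_{i,j}(aᵢⱼ − a⁽ᵖ⁾ᵢⱼ) → 0`
as `p → ∞`. -/
theorem stmt_6 {n : ℕ} (A : Matrix (Fin n) (Fin n) ℝ)
    (hnn : ∀ i j, 0 ≤ A i j) (hms : MaxStochastic A) :
    ∃ P₀ : ℕ, ∃ B : ℕ → Matrix (Fin n) (Fin n) ℝ,
      (∀ p ≥ P₀, PStochastic (B p) p ∧ (∀ i j, 0 ≤ B p i j) ∧
        (∀ i j, 0 < B p i j ↔ 0 < A i j) ∧ (∀ i j, B p i j ≤ A i j)) ∧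
      (∀ i j, Filter.Tendsto (fun p => A i j - B p i j) Filter.atTop (nhds 0)) := by
  set S : ℕ → Fin n → ℝ := fun p i => ∑ k, A i k ^ p with hS
  have hle1 : ∀ i j, A i j ≤ 1 := fun i j => (hms i).2 ⟨j, rfl⟩
  have hS1 : ∀ p i, 1 ≤ S p i := by
    intro p i
    obtain ⟨j, hj⟩ := (hms i).1
    calc (1:ℝ) = A i j ^ p := by rw [hj]; simp
    _ ≤ ∑ k, A i k ^ p := Finset.single_le_sum (fun k _ => pow_nonneg (hnn i k) p) (Finset.mem_univ j)
  have hSpos : ∀ p i, 0 < S p i := fun p i => lt_of_lt_of_le one_pos (hS1 p i)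
  have hSn : ∀ p i, S p i ≤ n := by
    intro p i
    calc S p i ≤ ∑ _k : Fin n, (1:ℝ) :=
      Finset.sum_le_sum (fun k _ => pow_le_one₀ (hnn i k) (hle1 i k))
    _ = n := by simp
  refine ⟨1, fun p i j => A i j * (S p i) ^ (-(p:ℝ)⁻¹), ?_, ?_⟩
  · intro p hp
    have hp0 : (p:ℝ) ≠ 0 := Nat.cast_ne_zero.mpr (by omega)
    refine ⟨?_, ?_, ?_, ?_⟩
    · intro i
      have : ∀ j, (A i j * (S p i) ^ (-(p:ℝ)⁻¹)) ^ p
          = A i j ^ p * (S p i)⁻¹ := by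
        intro j
        rw [mul_pow, ← Real.rpow_natCast ((S p i) ^ (-(p:ℝ)⁻¹)) p,
          ← Real.rpow_mul (hSpos p i).le]
        congr 1
        rw [neg_mul, inv_mul_cancel₀ hp0, Real.rpow_neg_one]
      simp only [this, ← Finset.sum_mul]
      exact mul_inv_cancel₀ (hSpos p i).ne'
    · intro i j
      exact mul_nonneg (hnn i j) (Real.rpow_nonneg (hSpos p i).le _)
    · intro i j
      constructor
      · intro h
        by_contra hA
        have : A i j = 0 := le_antisymm (not_lt.mp hA) (hnn i j)
        simp [this] at h
      · intro h
        exact mul_pos h (Real.rpow_pos_of_pos (hSpos p i) _)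
    · intro i j
      have : (S p i) ^ (-(p:ℝ)⁻¹) ≤ 1 :=
        Real.rpow_le_one_of_one_le_of_nonpos (hS1 p i)
          (neg_nonpos.mpr (inv_nonneg.mpr (Nat.cast_nonneg p)))
      calc A i j * (S p i) ^ (-(p:ℝ)⁻¹) ≤ A i j * 1 :=
        mul_le_mul_of_nonneg_left this (hnn i j)
      _ = A i j := mul_one _
  · intro i j
    have hn1 : (1:ℝ) ≤ n := by
      have := i.pos
      exact_mod_cast Nat.one_le_cast.mpr this
    have hexp : Filter.Tendsto (fun p : ℕ => -(p:ℝ)⁻¹) Filter.atTop (nhds 0) := by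
      have := (tendsto_natCast_atTop_atTop (R := ℝ)).inv_tendsto_atTop
      simpa using this.neg
    have hlow : Filter.Tendsto (fun p : ℕ => ((n:ℝ)) ^ (-(p:ℝ)⁻¹)) Filter.atTop (nhds 1) := by
      have := (tendsto_const_nhds (x := (n:ℝ)) (f := Filter.atTop (α := ℕ))).rpow hexp
        (Or.inl (by positivity))
      simpa using this
    have hsq : Filter.Tendsto (fun p : ℕ => (S p i) ^ (-(p:ℝ)⁻¹)) Filter.atTop (nhds 1) := by
      refine tendsto_of_tendsto_of_tendsto_of_le_of_le hlow tendsto_const_nhds ?_ ?_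
      · intro p
        exact Real.rpow_le_rpow_of_nonpos (hSpos p i) (hSn p i)
          (neg_nonpos.mpr (inv_nonneg.mpr (Nat.cast_nonneg p)))
      · intro p
        exact Real.rpow_le_one_of_one_le_of_nonpos (hS1 p i)
          (neg_nonpos.mpr (inv_nonneg.mpr (Nat.cast_nonneg p)))
    have : Filter.Tendsto (fun p : ℕ => A i j - A i j * (S p i) ^ (-(p:ℝ)⁻¹))
        Filter.atTop (nhds (A i j - A i j * 1)) :=
      Filter.Tendsto.sub tendsto_const_nhds (Filter.Tendsto.const_mul _ hsq)
    simpa using this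
end

section
/- Let A be an n×n irreducible p-stochastic matrix with nonnegative real entries, for some 1 ≤ p < ∞. Define w_i = (Σ_{T ∈ 𝒯_i} π(T,A)^p)^{1/p} for 1 ≤ i ≤ n. Then for every i, (Σ_{j=1}^n (a_{ji} w_j)^p)^{1/p} = w_i. -/
open scoped Classical

namespace Stmt7Aux

open Relation Finset

variable {n : ℕ}

/-- Edge relation of a finset of pairs. -/
def memE (F : Finset (Fin n × Fin n)) : Fin n → Fin n → Prop := fun a b => (a, b) ∈ F

/-- The successor function of a functional graph. -/
noncomputable def succF (F : Finset (Fin n × Fin n)) (v : Fin n) : Fin n :=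
  if h : ∃ k, (v, k) ∈ F then h.choose else v

lemma succF_mem {F : Finset (Fin n × Fin n)} {v : Fin n} (h : ∃ k, (v, k) ∈ F) :
    (v, succF F v) ∈ F := by
  rw [succF, dif_pos h]; exact h.choose_spec

lemma succF_eq {F : Finset (Fin n × Fin n)} {v k : Fin n} (h : (v, k) ∈ F)
    (huniq : ∀ k', (v, k') ∈ F → k' = k) : succF F v = k :=
  huniq _ (succF_mem ⟨k, h⟩)

lemma eq_succF {F : Finset (Fin n × Fin n)} (hfun : ∀ v, ∃! k, (v, k) ∈ F)
    {v k : Fin n} (h : (v, k) ∈ F) : k = succF F v :=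
  (hfun v).unique h (succF_mem ⟨k, h⟩)

lemma reach_iter {F : Finset (Fin n × Fin n)} (hfun : ∀ v, ∃! k, (v, k) ∈ F)
    {a b : Fin n} (h : ReflTransGen (memE F) a b) : ∃ m, (succF F)^[m] a = b := by
  induction h with
  | refl => exact ⟨0, rfl⟩
  | @tail b c h1 h2 ih =>
      obtain ⟨m, hm⟩ := ih
      refine ⟨m + 1, ?_⟩
      rw [Function.iterate_succ_apply', hm, ← eq_succF hfun h2]

lemma iter_reach {F : Finset (Fin n × Fin n)} (hfun : ∀ v, ∃! k, (v, k) ∈ F)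
    (m : ℕ) (a : Fin n) : ReflTransGen (memE F) a ((succF F)^[m] a) := by
  induction m with
  | zero => exact .refl
  | succ m ih =>
      rw [Function.iterate_succ_apply']
      exact ih.tail (succF_mem (hfun _).exists)

lemma erase_acyclic {F : Finset (Fin n × Fin n)} (hfun : ∀ v, ∃! k, (v, k) ∈ F)
    {r s : Fin n} (hrs : (r, s) ∈ F)
    (hreach : ∀ v, ReflTransGen (memE F) v r) (j : Fin n) :
    ¬ TransGen (memE (F.erase (r, s))) j j := by
  have hs : s = succF F r := eq_succF hfun hrs
  have key : ∀ m v, (succF F)^[m] v = r → ¬ TransGen (memE (F.erase (r, s))) v v := by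
    intro m
    induction m with
    | zero =>
        intro v hv hcyc
        obtain ⟨c, hvc, -⟩ := TransGen.head'_iff.mp hcyc
        simp only [Function.iterate_zero, id] at hv
        subst hv
        have hcF : (v, c) ∈ F := (Finset.mem_erase.mp hvc).2
        have : c = s := by rw [hs]; exact eq_succF hfun hcF
        subst this
        exact (Finset.mem_erase.mp hvc).1 rfl
    | succ m ih =>
        intro v hv hcyc
        obtain ⟨c, hvc, hcv⟩ := TransGen.head'_iff.mp hcyc
        by_cases hvr : v = r
        · subst hvr
          have hcF : (v, c) ∈ F := (Finset.mem_erase.mp hvc).2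
          have : c = s := by rw [hs]; exact eq_succF hfun hcF
          subst this
          exact (Finset.mem_erase.mp hvc).1 rfl
        · have hcF : (v, c) ∈ F := (Finset.mem_erase.mp hvc).2
          have hc : c = succF F v := eq_succF hfun hcF
          have hm : (succF F)^[m] c = r := by
            rw [hc, ← Function.iterate_succ_apply]; exact hv
          exact ih c hm (TransGen.tail' hcv hvc)
  obtain ⟨m, hm⟩ := reach_iter hfun (hreach j)
  exact key m j hm

lemma reach_root {R : Fin n → Fin n → Prop} {j : Fin n}
    (hout : ∀ v, v ≠ j → ∃ k, R v k)
    (hacyc : ∀ v, ¬ TransGen R v v) (v : Fin n) : ReflTransGen R v j := by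
  classical
  have key : ∀ (N : ℕ) (v : Fin n),
      (Finset.univ.filter fun x => ReflTransGen R v x).card ≤ N → ReflTransGen R v j := by
    intro N
    induction N with
    | zero =>
        intro v hv
        exfalso
        have h1 : 0 < (Finset.univ.filter fun x => ReflTransGen R v x).card :=
          Finset.card_pos.mpr ⟨v, Finset.mem_filter.mpr ⟨Finset.mem_univ v, .refl⟩⟩
        omega
    | succ N ih =>
        intro v hv
        by_cases hvj : v = j
        · subst hvj; exact .refl
        · obtain ⟨k, hk⟩ := hout v hvj
          have hsub : (Finset.univ.filter fun x => ReflTransGen R k x) ⊆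
              (Finset.univ.filter fun x => ReflTransGen R v x) := by
            intro x hx
            simp only [Finset.mem_filter, Finset.mem_univ, true_and] at hx ⊢
            exact ReflTransGen.head hk hx
          have hvnot : v ∉ (Finset.univ.filter fun x => ReflTransGen R k x) := by
            simp only [Finset.mem_filter, Finset.mem_univ, true_and]
            intro hkv
            exact hacyc v (TransGen.head' hk hkv)
          have hlt : (Finset.univ.filter fun x => ReflTransGen R k x).card <
              (Finset.univ.filter fun x => ReflTransGen R v x).card := by
            exact Finset.card_lt_card ⟨hsub, fun hcon =>
              hvnot (hcon (Finset.mem_filter.mpr ⟨Finset.mem_univ v, .refl⟩))⟩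
          exact ReflTransGen.head hk (ih k (by omega))
  exact key _ v le_rfl

/-- The predecessor of `i` on the unique cycle of a functional graph. -/
noncomputable def predF (F : Finset (Fin n × Fin n)) (i : Fin n) : Fin n :=
  if h : ∃ j, (j, i) ∈ F ∧ ReflTransGen (memE F) i j then h.choose else i

lemma predF_spec {F : Finset (Fin n × Fin n)} {i : Fin n}
    (h : ∃ j, (j, i) ∈ F ∧ ReflTransGen (memE F) i j) :
    (predF F i, i) ∈ F ∧ ReflTransGen (memE F) i (predF F i) := by
  rw [predF, dif_pos h]; exact h.choose_spec

lemma pred_unique {F : Finset (Fin n × Fin n)} (hfun : ∀ v, ∃! k, (v, k) ∈ F)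
    {i j1 j2 : Fin n}
    (h1 : (j1, i) ∈ F) (r1 : ReflTransGen (memE F) i j1)
    (h2 : (j2, i) ∈ F) (r2 : ReflTransGen (memE F) i j2) : j1 = j2 := by
  set f := succF F with hf
  obtain ⟨t1, ht1⟩ := reach_iter hfun r1
  obtain ⟨t2, ht2⟩ := reach_iter hfun r2
  have e1 : f^[t1 + 1] i = i := by
    rw [hf, Function.iterate_succ_apply', ht1, ← eq_succF hfun h1]
  have e2 : f^[t2 + 1] i = i := by
    rw [hf, Function.iterate_succ_apply', ht2, ← eq_succF hfun h2]
  calc j1 = f^[t1] i := ht1.symm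
    _ = f^[t1] (f^[t2 + 1] i) := by rw [e2]
    _ = f^[t1 + (t2 + 1)] i := (Function.iterate_add_apply f t1 (t2 + 1) i).symm
    _ = f^[t2 + (t1 + 1)] i := by rw [Nat.add_comm t2 (t1+1), Nat.add_assoc, Nat.add_comm 1 t2]
    _ = f^[t2] (f^[t1 + 1] i) := Function.iterate_add_apply f t2 (t1 + 1) i
    _ = f^[t2] i := by rw [e1]
    _ = j2 := ht2

/-- Combinatorial `i`-trees (no positivity requirement on the edges). -/
noncomputable def cTrees (i : Fin n) : Finset (Finset (Fin n × Fin n)) :=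
  Finset.univ.filter fun T => (∀ j : Fin n, j ≠ i → ∃! k : Fin n, (j, k) ∈ T) ∧
    (∀ k : Fin n, (i, k) ∉ T) ∧ ∀ j : Fin n, ¬ TransGen (memE T) j j

lemma mem_cTrees {i : Fin n} {T : Finset (Fin n × Fin n)} :
    T ∈ cTrees i ↔ (∀ j : Fin n, j ≠ i → ∃! k : Fin n, (j, k) ∈ T) ∧
      (∀ k : Fin n, (i, k) ∉ T) ∧ ∀ j : Fin n, ¬ TransGen (memE T) j j := by
  simp [cTrees]

/-- Functional graphs all of whose vertices reach `i`. -/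
noncomputable def funGraphs (i : Fin n) : Finset (Finset (Fin n × Fin n)) :=
  Finset.univ.filter fun F => (∀ v : Fin n, ∃! k : Fin n, (v, k) ∈ F) ∧
    ∀ v : Fin n, ReflTransGen (memE F) v i

lemma mem_funGraphs {i : Fin n} {F : Finset (Fin n × Fin n)} :
    F ∈ funGraphs i ↔ (∀ v : Fin n, ∃! k : Fin n, (v, k) ∈ F) ∧
      ∀ v : Fin n, ReflTransGen (memE F) v i := by
  simp [funGraphs]

lemma tree_reach {i : Fin n} {T : Finset (Fin n × Fin n)} (hT : T ∈ cTrees i) (v : Fin n) :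
    ReflTransGen (memE T) v i := by
  obtain ⟨hfun, -, hacyc⟩ := mem_cTrees.mp hT
  exact reach_root (fun u hu => (hfun u hu).exists) hacyc v

lemma insert_fun {j i : Fin n} {T : Finset (Fin n × Fin n)} (hT : T ∈ cTrees j) :
    ∀ v : Fin n, ∃! k : Fin n, (v, k) ∈ insert (j, i) T := by
  obtain ⟨hfun, hno, -⟩ := mem_cTrees.mp hT
  intro v
  by_cases hvj : v = j
  · subst hvj
    refine ⟨i, Finset.mem_insert_self _ _, fun k hk => ?_⟩
    rcases Finset.mem_insert.mp hk with h | h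
    · exact (Prod.mk.injEq _ _ _ _ ▸ h).2
    · exact absurd h (hno k)
  · obtain ⟨k, hk, huniq⟩ := hfun v hvj
    refine ⟨k, Finset.mem_insert_of_mem hk, fun k' hk' => ?_⟩
    rcases Finset.mem_insert.mp hk' with h | h
    · exact absurd (congrArg Prod.fst h) hvj
    · exact huniq k' h

lemma insert_mem_funGraphs {j i : Fin n} {T : Finset (Fin n × Fin n)} (hT : T ∈ cTrees j) :
    insert (j, i) T ∈ funGraphs i := by
  refine mem_funGraphs.mpr ⟨insert_fun hT, fun v => ?_⟩
  have h1 : ReflTransGen (memE (insert (j, i) T)) v j :=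
    ReflTransGen.mono (fun a b hab => Finset.mem_insert_of_mem hab) _ _ (tree_reach hT v)
  exact h1.tail (Finset.mem_insert_self _ _)

lemma insertR_mem_funGraphs {i k : Fin n} {T : Finset (Fin n × Fin n)} (hT : T ∈ cTrees i) :
    insert (i, k) T ∈ funGraphs i := by
  refine mem_funGraphs.mpr ⟨insert_fun hT, fun v => ?_⟩
  exact ReflTransGen.mono (fun a b hab => Finset.mem_insert_of_mem hab) _ _ (tree_reach hT v)

lemma erase_mem_cTrees {F : Finset (Fin n × Fin n)} (hfun : ∀ v, ∃! k : Fin n, (v, k) ∈ F)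
    {r s : Fin n} (hrs : (r, s) ∈ F) (hreach : ∀ v, ReflTransGen (memE F) v r) :
    F.erase (r, s) ∈ cTrees r := by
  refine mem_cTrees.mpr ⟨?_, ?_, erase_acyclic hfun hrs hreach⟩
  · intro v hvr
    obtain ⟨k, hk, huniq⟩ := hfun v
    refine ⟨k, Finset.mem_erase.mpr ⟨fun hcon => hvr (congrArg Prod.fst hcon), hk⟩,
      fun k' hk' => huniq k' (Finset.mem_erase.mp hk').2⟩
  · intro k hk
    have hkF : (r, k) ∈ F := (Finset.mem_erase.mp hk).2
    have : k = s := (hfun r).unique hkF hrs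
    subst this
    exact (Finset.mem_erase.mp hk).1 rfl

lemma funGraphs_pred_ex {i : Fin n} {F : Finset (Fin n × Fin n)} (hF : F ∈ funGraphs i) :
    ∃ j, (j, i) ∈ F ∧ ReflTransGen (memE F) i j := by
  obtain ⟨hfun, hreach⟩ := mem_funGraphs.mp hF
  obtain ⟨m, hm⟩ := reach_iter hfun (hreach (succF F i))
  have hm' : succF F ((succF F)^[m] i) = i := by
    rw [← Function.iterate_succ_apply' (succF F) m i, Function.iterate_succ_apply]
    exact hm
  refine ⟨(succF F)^[m] i, ?_, iter_reach hfun m i⟩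
  have h2 := succF_mem (F := F) (v := (succF F)^[m] i) (hfun _).exists
  rwa [hm'] at h2

lemma claimR (B : Matrix (Fin n) (Fin n) ℝ) (i : Fin n) :
    ∑ x ∈ cTrees i ×ˢ (Finset.univ : Finset (Fin n)), treeWeight B x.1 * B i x.2
      = ∑ F ∈ funGraphs i, treeWeight B F := by
  refine Finset.sum_bij' (fun x _ => insert (i, x.2) x.1)
      (fun F _ => (F.erase (i, succF F i), succF F i)) ?_ ?_ ?_ ?_ ?_
  · rintro ⟨T, k⟩ hTk
    exact insertR_mem_funGraphs (Finset.mem_product.mp hTk).1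
  · intro F hF
    obtain ⟨hfun, hreach⟩ := mem_funGraphs.mp hF
    refine Finset.mem_product.mpr ⟨?_, Finset.mem_univ _⟩
    exact erase_mem_cTrees hfun (succF_mem (hfun i).exists) hreach
  · rintro ⟨T, k⟩ hTk
    have hT := (Finset.mem_product.mp hTk).1
    obtain ⟨-, hno, -⟩ := mem_cTrees.mp hT
    have hsucc : succF (insert (i, k) T) i = k := by
      refine succF_eq (Finset.mem_insert_self _ _) fun k' hk' => ?_
      rcases Finset.mem_insert.mp hk' with h | h
      · exact (Prod.mk.injEq _ _ _ _ ▸ h).2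
      · exact absurd h (hno k')
    dsimp only
    rw [hsucc, Finset.erase_insert (hno k)]
  · intro F hF
    obtain ⟨hfun, -⟩ := mem_funGraphs.mp hF
    exact Finset.insert_erase (succF_mem (hfun i).exists)
  · rintro ⟨T, k⟩ hTk
    have hT := (Finset.mem_product.mp hTk).1
    obtain ⟨-, hno, -⟩ := mem_cTrees.mp hT
    dsimp only
    simp only [treeWeight]
    rw [Finset.prod_insert (hno k), mul_comm]

lemma claimL (B : Matrix (Fin n) (Fin n) ℝ) (i : Fin n) :
    ∑ x ∈ (Finset.univ : Finset (Fin n)).sigma (fun j => cTrees j),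
        B x.1 i * treeWeight B x.2
      = ∑ F ∈ funGraphs i, treeWeight B F := by
  refine Finset.sum_bij' (fun x _ => insert (x.1, i) x.2)
      (fun F _ => ⟨predF F i, F.erase (predF F i, i)⟩) ?_ ?_ ?_ ?_ ?_
  · rintro ⟨j, T⟩ hT
    exact insert_mem_funGraphs (Finset.mem_sigma.mp hT).2
  · intro F hF
    obtain ⟨hfun, hreach⟩ := mem_funGraphs.mp hF
    have hspec := predF_spec (funGraphs_pred_ex hF)
    refine Finset.mem_sigma.mpr ⟨Finset.mem_univ _, ?_⟩
    exact erase_mem_cTrees hfun hspec.1 fun v => (hreach v).trans hspec.2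
  · rintro ⟨j, T⟩ hT
    have hTm := (Finset.mem_sigma.mp hT).2
    obtain ⟨-, hno, -⟩ := mem_cTrees.mp hTm
    have hfunF := insert_fun (i := i) hTm
    have hji : (j, i) ∈ insert (j, i) T := Finset.mem_insert_self _ _
    have hrj : ReflTransGen (memE (insert (j, i) T)) i j :=
      ReflTransGen.mono (fun a b hab => Finset.mem_insert_of_mem hab) _ _ (tree_reach hTm i)
    have hspec := predF_spec (F := insert (j, i) T) (i := i) ⟨j, hji, hrj⟩
    have hpred : predF (insert (j, i) T) i = j :=
      pred_unique hfunF hspec.1 hspec.2 hji hrj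
    dsimp only
    rw [hpred, Finset.erase_insert (hno i)]
  · intro F hF
    have hspec := predF_spec (funGraphs_pred_ex hF)
    exact Finset.insert_erase hspec.1
  · rintro ⟨j, T⟩ hT
    have hTm := (Finset.mem_sigma.mp hT).2
    obtain ⟨-, hno, -⟩ := mem_cTrees.mp hTm
    dsimp only
    simp only [treeWeight]
    rw [Finset.prod_insert (hno i)]

lemma core (B : Matrix (Fin n) (Fin n) ℝ) (hrow : ∀ j, ∑ k, B j k = 1) (i : Fin n) :
    ∑ j, B j i * ∑ T ∈ cTrees j, treeWeight B T = ∑ T ∈ cTrees i, treeWeight B T := by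
  have lhs : ∑ j, B j i * ∑ T ∈ cTrees j, treeWeight B T
      = ∑ x ∈ (Finset.univ : Finset (Fin n)).sigma (fun j => cTrees j),
          B x.1 i * treeWeight B x.2 := by
    rw [Finset.sum_sigma]
    simp [Finset.mul_sum]
  have rhs : ∑ T ∈ cTrees i, treeWeight B T
      = ∑ x ∈ cTrees i ×ˢ (Finset.univ : Finset (Fin n)),
          treeWeight B x.1 * B i x.2 := by
    rw [Finset.sum_product]
    simp [← Finset.mul_sum, hrow i]
  rw [lhs, rhs, claimL, claimR]

lemma sum_iTrees_eq (A B : Matrix (Fin n) (Fin n) ℝ)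
    (hAB : ∀ a b, ¬ 0 < A a b → B a b = 0) (j : Fin n) :
    ∑ T ∈ iTrees A j, treeWeight B T = ∑ T ∈ cTrees j, treeWeight B T := by
  refine Finset.sum_subset ?_ ?_
  · intro T hT
    have h : IsITree (edgeRel A) j T := (Finset.mem_filter.mp hT).2
    obtain ⟨-, h2, h3, h4⟩ := h
    exact mem_cTrees.mpr ⟨h2, h3, h4⟩
  · intro T hT hnT
    obtain ⟨h2, h3, h4⟩ := mem_cTrees.mp hT
    have hne : ¬ ∀ e ∈ T, edgeRel A e.1 e.2 := by
      intro hcon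
      exact hnT (Finset.mem_filter.mpr ⟨Finset.mem_univ _, hcon, h2, h3, h4⟩)
    push_neg at hne
    obtain ⟨e, heT, he⟩ := hne
    simp only [treeWeight]
    exact Finset.prod_eq_zero heT (hAB e.1 e.2 he)

end Stmt7Aux

/-- Markov Chain Tree Theorem in the `p`-semiring: if `A` is an
`n × n` irreducible `p`-stochastic matrix (`∑ⱼ aᵢⱼᵖ = 1` for every `i`) for some real
`p ≥ 1`, and `wᵢ = (∑_{T ∈ 𝒯ᵢ} π(T, A)ᵖ)^{1/p}`, then
`(∑ⱼ (aⱼᵢ wⱼ)ᵖ)^{1/p} = wᵢ` for every `i`. -/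
theorem stmt_7 {n : ℕ} (A : Matrix (Fin n) (Fin n) ℝ)
    (hnn : ∀ i j, 0 ≤ A i j) (hirr : IrreducibleMat A)
    (p : ℝ) (hp : 1 ≤ p) (hps : ∀ i, ∑ j, A i j ^ p = 1)
    (w : Fin n → ℝ)
    (hw : ∀ i, w i = (∑ T ∈ iTrees A i, treeWeight A T ^ p) ^ p⁻¹) :
    ∀ i, (∑ j, (A j i * w j) ^ p) ^ p⁻¹ = w i := by
  classical
  intro i
  have hp0 : p ≠ 0 := by intro h; rw [h] at hp; linarith
  set B : Matrix (Fin n) (Fin n) ℝ := Matrix.of fun a b => A a b ^ p with hB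
  have hBa : ∀ a b, B a b = A a b ^ p := fun a b => rfl
  have hBnn : ∀ a b, 0 ≤ B a b := fun a b => Real.rpow_nonneg (hnn a b) p
  have htw : ∀ T : Finset (Fin n × Fin n), treeWeight A T ^ p = treeWeight B T := by
    intro T
    simp only [treeWeight]
    rw [← Real.finset_prod_rpow T _ (fun e _ => hnn e.1 e.2) p]
    exact Finset.prod_congr rfl fun e _ => (hBa e.1 e.2).symm
  have hAB : ∀ a b, ¬ 0 < A a b → B a b = 0 := by
    intro a b h
    have hz : A a b = 0 := le_antisymm (not_lt.mp h) (hnn a b)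
    rw [hBa, hz, Real.zero_rpow hp0]
  set W : Fin n → ℝ := fun j => ∑ T ∈ Stmt7Aux.cTrees j, treeWeight B T with hW
  have hWnn : ∀ j, 0 ≤ W j :=
    fun j => Finset.sum_nonneg fun T _ => Finset.prod_nonneg fun e _ => hBnn e.1 e.2
  have hwW : ∀ j, w j = W j ^ p⁻¹ := by
    intro j
    rw [hw j]
    congr 1
    have hWj : W j = ∑ T ∈ Stmt7Aux.cTrees j, treeWeight B T := rfl
    rw [hWj, ← Stmt7Aux.sum_iTrees_eq A B hAB j]
    exact Finset.sum_congr rfl fun T _ => htw T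
  have hterm : ∀ j, (A j i * w j) ^ p = B j i * W j := by
    intro j
    rw [hwW j, Real.mul_rpow (hnn j i) (Real.rpow_nonneg (hWnn j) _),
      Real.rpow_inv_rpow (hWnn j) hp0, hBa]
  have hsum : ∑ j, (A j i * w j) ^ p = W i := by
    rw [Finset.sum_congr rfl fun j _ => hterm j]
    exact Stmt7Aux.core B (fun j => hps j) i
  rw [hsum, hwW i]
end

section
/- Let A be an n×n irreducible matrix with nonnegative real entries and μ(A) = 1, and let i be a critical node of A. Then the i-th column A*_{·i} of the Kleene star A* is a max eigenvector of A associated with eigenvalue 1; that is, max_{1≤j≤n} a_{kj} a*_{ji} = a*_{ki} for every k ∈ {1,…,n}. -/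
open scoped Classical

set_option linter.unusedSectionVars false

section AuxStmt9
variable {n : ℕ} {A : Matrix (Fin n) (Fin n) ℝ}

lemma zip_trunc {α β : Type*} : ∀ (l₁ : List α) (l₂ : List β) (x : α), l₁.length = l₂.length →
    (l₁ ++ [x]).zip l₂ = l₁.zip l₂
  | [], [], x, _ => rfl
  | [], b :: t, x, h => by simp at h
  | a :: s, [], x, h => by simp at h
  | a :: s, b :: t, x, h => by
    simp only [List.cons_append, List.zip_cons_cons]
    rw [zip_trunc s t x (by simpa using h)]

lemma cycleEdges_closed {n : ℕ} (a : Fin n) (t : List (Fin n)) :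
    pathEdges ((a :: t) ++ [a]) = cycleEdges (a :: t) := by
  unfold pathEdges cycleEdges
  rw [show (1:ℕ) = 0 + 1 from rfl, List.rotate_cons_succ, List.rotate_zero]
  simp only [List.cons_append, List.tail_cons]
  exact zip_trunc (a :: t) (t ++ [a]) a (by simp)

lemma rpow_aux_le {w : ℝ} {m : ℕ} (hm : m ≠ 0) (hw : 0 < w)
    (h : w ^ ((m:ℝ)⁻¹) ≤ 1) : w ≤ 1 := by
  calc w = (w ^ ((m:ℝ)⁻¹)) ^ m := (Real.rpow_inv_natCast_pow hw.le hm).symm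
  _ ≤ 1 := pow_le_one₀ (Real.rpow_nonneg hw.le _) h

lemma rpow_aux_eq {w : ℝ} {m : ℕ} (hm : m ≠ 0) (hw : 0 < w)
    (h : w ^ ((m:ℝ)⁻¹) = 1) : w = 1 := by
  calc w = (w ^ ((m:ℝ)⁻¹)) ^ m := (Real.rpow_inv_natCast_pow hw.le hm).symm
  _ = 1 := by rw [h, one_pow]

variable {n : ℕ} {A : Matrix (Fin n) (Fin n) ℝ}

/-- Any closed walk decomposes as `c ++ [v]` with `c` a cycle having the same edges. -/
lemma closed_walk_decomp {v : Fin n} {P : List (Fin n)} (hP : IsPathIn A v v P) :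
    ∃ c : List (Fin n), c ≠ [] ∧ P = c ++ [v] ∧ pathEdges P = cycleEdges c ∧
      c.length + 1 = P.length := by
  obtain ⟨h1, h2, h3, _⟩ := hP
  obtain ⟨Q, rfl⟩ : ∃ Q, P = v :: Q := by
    cases P with
    | nil => simp at h1
    | cons a Q => exact ⟨Q, by simpa using (by simpa using h1 : a = v) ▸ rfl⟩
  have hQ : Q ≠ [] := by
    intro h; subst h; simp at h3
  have hlast : Q.getLast hQ = v := by
    have : (v :: Q).getLast (List.cons_ne_nil _ _) = v := by
      have := List.getLast?_eq_getLast (l := v :: Q) (List.cons_ne_nil _ _)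
      rw [h2] at this; exact (Option.some_injective _ this.symm)
    rwa [List.getLast_cons hQ] at this
  refine ⟨v :: Q.dropLast, List.cons_ne_nil _ _, ?_, ?_, ?_⟩
  · have := List.dropLast_append_getLast hQ
    rw [hlast] at this
    rw [List.cons_append, this]
  · have := List.dropLast_append_getLast hQ
    rw [hlast] at this
    conv_lhs => rw [← this]
    exact cycleEdges_closed v Q.dropLast
  · have hQl : 1 ≤ Q.length := List.length_pos_iff.mpr hQ
    simp only [List.length_cons, List.length_dropLast]
    omega

lemma pathWeight_nonneg (hnn : ∀ i j, 0 ≤ A i j) (P : List (Fin n)) :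
    0 ≤ pathWeight A P :=
  List.prod_nonneg (by rintro x hx; obtain ⟨e, _, rfl⟩ := List.mem_map.mp hx; exact hnn _ _)

lemma closedWalk_le_one (hmu : IsGreatest {x | ∃ c, IsCycleIn A c ∧ x = cycleGeoMean A c} 1)
    {v : Fin n} {P : List (Fin n)} (hP : IsPathIn A v v P) : pathWeight A P ≤ 1 := by
  obtain ⟨c, hc, hPc, hE, hlen⟩ := closed_walk_decomp hP
  have hpos : ∀ e ∈ cycleEdges c, 0 < A e.1 e.2 := fun e he => hP.2.2.2 e (hE ▸ he)
  have hcyc : IsCycleIn A c := ⟨hc, hpos⟩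
  have hge : cycleGeoMean A c ≤ 1 := hmu.2 ⟨c, hcyc, rfl⟩
  have hw : pathWeight A P = ((cycleEdges c).map fun e => A e.1 e.2).prod := by
    rw [pathWeight, hE]
  have hwpos : 0 < ((cycleEdges c).map fun e => A e.1 e.2).prod := by
    apply List.prod_pos
    rintro x hx
    obtain ⟨e, he, rfl⟩ := List.mem_map.mp hx
    exact hpos e he
  rw [hw]
  exact rpow_aux_le (by simpa [List.length_eq_zero_iff] using hc) hwpos hge

lemma pathEdges_split {n : ℕ} : ∀ (L1 : List (Fin n)) (w : Fin n) (L2 : List (Fin n)),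
    pathEdges (L1 ++ w :: L2) = pathEdges (L1 ++ [w]) ++ pathEdges (w :: L2)
  | [], w, L2 => by simp [pathEdges]
  | [a], w, L2 => by simp [pathEdges]
  | a :: b :: L1, w, L2 => by
    have ih := pathEdges_split (b :: L1) w L2
    simp only [List.cons_append] at ih ⊢
    rw [show pathEdges (a :: b :: (L1 ++ w :: L2)) = (a,b) :: pathEdges (b :: (L1 ++ w :: L2)) from rfl,
      ih]
    rfl

lemma pathWeight_split (L1 : List (Fin n)) (w : Fin n) (L2 : List (Fin n)) :
    pathWeight A (L1 ++ w :: L2) = pathWeight A (L1 ++ [w]) * pathWeight A (w :: L2) := by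
  unfold pathWeight
  rw [pathEdges_split, List.map_append, List.prod_append]

lemma exists_dup_decomp {α : Type*} : ∀ {l : List α}, ¬ l.Nodup →
    ∃ (v : α) (X Y Z : List α), l = X ++ v :: (Y ++ v :: Z)
  | [], h => absurd List.nodup_nil h
  | a :: t, h => by
    by_cases ha : a ∈ t
    · obtain ⟨Y, Z, rfl⟩ := List.append_of_mem ha
      exact ⟨a, [], Y, Z, rfl⟩
    · have ht : ¬ t.Nodup := fun hn => h (List.nodup_cons.mpr ⟨ha, hn⟩)
      obtain ⟨v, X, Y, Z, rfl⟩ := exists_dup_decomp ht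
      exact ⟨v, a :: X, Y, Z, rfl⟩

noncomputable def Bnd {n : ℕ} (A : Matrix (Fin n) (Fin n) ℝ) : ℝ := 1 + ∑ i, ∑ j, A i j

lemma one_le_Bnd (hnn : ∀ i j, 0 ≤ A i j) : 1 ≤ Bnd A := by
  have : (0:ℝ) ≤ ∑ i, ∑ j, A i j :=
    Finset.sum_nonneg fun i _ => Finset.sum_nonneg fun j _ => hnn i j
  simp [Bnd]; linarith

lemma entry_le_Bnd (hnn : ∀ i j, 0 ≤ A i j) (i j : Fin n) : A i j ≤ Bnd A := by
  have h1 : A i j ≤ ∑ j', A i j' :=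
    Finset.single_le_sum (fun j' _ => hnn i j') (Finset.mem_univ j)
  have h2 : (∑ j', A i j') ≤ ∑ i', ∑ j', A i' j' :=
    Finset.single_le_sum (fun i' _ => Finset.sum_nonneg fun j' _ => hnn i' j')
      (Finset.mem_univ i)
  simp only [Bnd]; linarith

lemma list_prod_le_pow {B : ℝ} (hB : 1 ≤ B) : ∀ l : List ℝ,
    (∀ x ∈ l, 0 ≤ x ∧ x ≤ B) → l.prod ≤ B ^ l.length
  | [], _ => by simp
  | x :: t, h => by
    have ih := list_prod_le_pow hB t (fun y hy => h y (List.mem_cons_of_mem _ hy))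
    have hx := h x (List.mem_cons_self)
    have ht : 0 ≤ t.prod := List.prod_nonneg fun y hy => (h y (List.mem_cons_of_mem _ hy)).1
    simp only [List.prod_cons, List.length_cons, pow_succ]
    calc x * t.prod ≤ B * B ^ t.length :=
      mul_le_mul hx.2 ih ht (le_trans zero_le_one hB)
    _ = B ^ t.length * B := by ring

lemma pathWeight_le_bound (hnn : ∀ i j, 0 ≤ A i j)
    (hmu : IsGreatest {x | ∃ c, IsCycleIn A c ∧ x = cycleGeoMean A c} 1) :
    ∀ (m : ℕ) {a b : Fin n} {P : List (Fin n)}, IsPathIn A a b P → P.length ≤ m →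
      pathWeight A P ≤ (Bnd A) ^ n := by
  intro m
  induction m with
  | zero => intro a b P hP hl; have := hP.2.2.1; omega
  | succ m ih =>
    intro a b P hP hl
    by_cases hnd : P.Nodup
    · have hPn : P.length ≤ n := by
        simpa [Fintype.card_fin] using hnd.length_le_card
      have hEn : (pathEdges P).length ≤ n := by
        unfold pathEdges
        rw [List.length_zip]
        omega
      calc pathWeight A P ≤ (Bnd A) ^ ((pathEdges P).map fun e => A e.1 e.2).length := by
            apply list_prod_le_pow (one_le_Bnd hnn)
            rintro x hx
            obtain ⟨e, _, rfl⟩ := List.mem_map.mp hx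
            exact ⟨hnn _ _, entry_le_Bnd hnn _ _⟩
      _ ≤ (Bnd A) ^ n := by
            apply pow_le_pow_right₀ (one_le_Bnd hnn)
            simpa using hEn
    · obtain ⟨v, X, Y, Z, rfl⟩ := exists_dup_decomp hnd
      set P := X ++ v :: (Y ++ v :: Z) with hPdef
      have hedge : pathEdges P = pathEdges (X ++ [v]) ++
          (pathEdges ((v :: Y) ++ [v]) ++ pathEdges (v :: Z)) := by
        rw [hPdef, pathEdges_split X v (Y ++ v :: Z),
          show (v :: (Y ++ v :: Z)) = (v :: Y) ++ v :: Z from rfl,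
          pathEdges_split (v :: Y) v Z]
      have hC : IsPathIn A v v ((v :: Y) ++ [v]) := by
        refine ⟨by simp, List.getLast?_concat, by simp, ?_⟩
        intro e he
        refine hP.2.2.2 e ?_
        rw [hedge]
        exact List.mem_append.mpr (Or.inr (List.mem_append.mpr (Or.inl he)))
      have hCle : pathWeight A ((v :: Y) ++ [v]) ≤ 1 := closedWalk_le_one hmu hC
      have hsplit : pathWeight A P =
          (pathWeight A (X ++ [v]) * pathWeight A (v :: Z)) *
            pathWeight A ((v :: Y) ++ [v]) := by
        rw [hPdef, pathWeight_split X v (Y ++ v :: Z),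
          show (v :: (Y ++ v :: Z)) = (v :: Y) ++ v :: Z from rfl,
          pathWeight_split (v :: Y) v Z]
        ring
      by_cases hXZ : X = [] ∧ Z = []
      · obtain ⟨hX, hZ⟩ := hXZ
        subst hX; subst hZ
        have hPP : IsPathIn A v v P := by
          refine ⟨by simp [hPdef], ?_, hP.2.2.1, hP.2.2.2⟩
          show P.getLast? = some v
          rw [hPdef, List.nil_append,
            show v :: (Y ++ v :: []) = (v :: Y) ++ [v] from rfl]
          exact List.getLast?_concat
        calc pathWeight A P ≤ 1 := closedWalk_le_one hmu hPP
        _ ≤ (Bnd A) ^ n := one_le_pow₀ (one_le_Bnd hnn)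
      · set Q := X ++ v :: Z with hQdef
        have hQedge : pathEdges Q = pathEdges (X ++ [v]) ++ pathEdges (v :: Z) :=
          pathEdges_split X v Z
        have hQlen : 2 ≤ Q.length := by
          rw [hQdef]
          simp only [List.length_append, List.length_cons]
          rcases (not_and_or.mp hXZ) with h | h
          · have := List.length_pos_iff.mpr h; omega
          · have := List.length_pos_iff.mpr h; omega
        have hlast' : ∃ g, (v :: Z).getLast? = some g :=
          ⟨(v :: Z).getLast (List.cons_ne_nil _ _),
            List.getLast?_eq_getLast _⟩
        obtain ⟨g, hg⟩ := hlast'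
        have hPlast : P.getLast? = some g := by
          rw [hPdef, show X ++ v :: (Y ++ v :: Z) = (X ++ v :: Y) ++ (v :: Z) by simp,
            List.getLast?_append, hg]
          rfl
        have hQlast : Q.getLast? = some g := by
          rw [hQdef, show X ++ v :: Z = X ++ (v :: Z) from rfl, List.getLast?_append, hg]
          rfl
        have hQhead : Q.head? = P.head? := by
          rw [hQdef, hPdef]
          cases X with
          | nil => rfl
          | cons x X' => rfl
        have hQ : IsPathIn A a b Q := by
          refine ⟨by rw [hQhead]; exact hP.1, ?_, hQlen, ?_⟩
          · rw [hQlast, ← hPlast]; exact hP.2.1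
          · intro e he
            apply hP.2.2.2
            rw [hedge]
            rw [hQedge] at he
            rcases List.mem_append.mp he with h | h
            · simp [h]
            · simp [h]
        have hQshort : Q.length ≤ m := by
          have h1 : P.length ≤ m + 1 := hl
          rw [hPdef] at h1
          rw [hQdef]
          simp only [List.length_append, List.length_cons] at h1 ⊢
          omega
        have hQle := ih hQ hQshort
        have hQw : pathWeight A Q = pathWeight A (X ++ [v]) * pathWeight A (v :: Z) := by
          rw [hQdef, pathWeight_split X v Z]
        have hQnn : 0 ≤ pathWeight A Q := pathWeight_nonneg hnn Q
        have hCnn : 0 ≤ pathWeight A ((v :: Y) ++ [v]) := pathWeight_nonneg hnn _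
        calc pathWeight A P
            = pathWeight A Q * pathWeight A ((v :: Y) ++ [v]) := by rw [hsplit, hQw]
        _ ≤ pathWeight A Q * 1 := mul_le_mul_of_nonneg_left hCle hQnn
        _ = pathWeight A Q := mul_one _
        _ ≤ (Bnd A) ^ n := hQle

lemma bddAbove_pset (hnn : ∀ i j, 0 ≤ A i j)
    (hmu : IsGreatest {x | ∃ c, IsCycleIn A c ∧ x = cycleGeoMean A c} 1) (a b : Fin n) :
    BddAbove (insert (0:ℝ) {x | ∃ P, IsPathIn A a b P ∧ x = pathWeight A P}) := by
  refine ⟨(Bnd A) ^ n, ?_⟩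
  rintro x hx
  rcases Set.mem_insert_iff.mp hx with rfl | ⟨P, hP, rfl⟩
  · exact pow_nonneg (le_trans zero_le_one (one_le_Bnd hnn)) n
  · exact pathWeight_le_bound hnn hmu P.length hP le_rfl

section SFacts
variable {S : Matrix (Fin n) (Fin n) ℝ}
variable (hnn : ∀ i j, 0 ≤ A i j)
  (hmu : IsGreatest {x | ∃ c, IsCycleIn A c ∧ x = cycleGeoMean A c} 1)
  (hS : IsKleeneStar A S)
include hnn hmu hS

lemma S_nonneg (a b : Fin n) : 0 ≤ S a b := by
  by_cases hab : a = b
  · subst hab; rw [hS.1]; norm_num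
  · rw [hS.2 a b hab]
    exact le_csSup (bddAbove_pset hnn hmu a b) (Set.mem_insert _ _)

lemma pathWeight_le_S {a b : Fin n} (hab : a ≠ b) {P : List (Fin n)}
    (hP : IsPathIn A a b P) : pathWeight A P ≤ S a b := by
  rw [hS.2 a b hab]
  exact le_csSup (bddAbove_pset hnn hmu a b)
    (Set.mem_insert_iff.mpr (Or.inr ⟨P, hP, rfl⟩))

lemma S_le {a b : Fin n} (hab : a ≠ b) {y : ℝ} (h0 : 0 ≤ y)
    (h : ∀ P, IsPathIn A a b P → pathWeight A P ≤ y) : S a b ≤ y := by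
  rw [hS.2 a b hab]
  refine csSup_le ⟨0, Set.mem_insert _ _⟩ ?_
  rintro x hx
  rcases Set.mem_insert_iff.mp hx with rfl | ⟨P, hP, rfl⟩
  · exact h0
  · exact h P hP

end SFacts

lemma pathIn_cons {a b c : Fin n} {P : List (Fin n)} (hP : IsPathIn A b c P)
    (hab : 0 < A a b) :
    IsPathIn A a c (a :: P) ∧ pathWeight A (a :: P) = A a b * pathWeight A P := by
  obtain ⟨h1, h2, h3, h4⟩ := hP
  obtain ⟨R, rfl⟩ : ∃ R, P = b :: R := by
    cases P with
    | nil => simp at h1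
    | cons x R => exact ⟨R, by simpa using (by simpa using h1 : x = b) ▸ rfl⟩
  constructor
  · refine ⟨rfl, by rwa [List.getLast?_cons_cons], by simp, ?_⟩
    intro e he
    rw [show pathEdges (a :: b :: R) = (a, b) :: pathEdges (b :: R) from rfl] at he
    rcases List.mem_cons.mp he with rfl | he
    · exact hab
    · exact h4 e he
  · rw [pathWeight, show pathEdges (a :: b :: R) = (a, b) :: pathEdges (b :: R) from rfl]
    simp [pathWeight]

lemma gen_UB {S : Matrix (Fin n) (Fin n) ℝ}
    (hnn : ∀ i j, 0 ≤ A i j)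
    (hmu : IsGreatest {x | ∃ c, IsCycleIn A c ∧ x = cycleGeoMean A c} 1)
    (hS : IsKleeneStar A S) (t k j : Fin n) : A k j * S j t ≤ S k t := by
  by_cases hkj : A k j = 0
  · rw [hkj, zero_mul]; exact S_nonneg hnn hmu hS k t
  have hpos : 0 < A k j := lt_of_le_of_ne (hnn k j) (Ne.symm hkj)
  by_cases hjt : j = t
  · subst hjt
    rw [hS.1, mul_one]
    by_cases hkt : k = j
    · subst hkt
      have hcl : IsPathIn A k k [k, k] := by
        refine ⟨rfl, rfl, by simp, ?_⟩
        intro e he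
        rcases List.mem_singleton.mp he with rfl
        exact hpos
      have := closedWalk_le_one hmu hcl
      rw [hS.1]
      calc A k k = pathWeight A [k, k] := by simp [pathWeight, pathEdges]
      _ ≤ 1 := this
    · have hP : IsPathIn A k j [k, j] := by
        refine ⟨rfl, rfl, by simp, ?_⟩
        intro e he
        rcases List.mem_singleton.mp he with rfl
        exact hpos
      calc A k j = pathWeight A [k, j] := by simp [pathWeight, pathEdges]
      _ ≤ S k j := pathWeight_le_S hnn hmu hS hkt hP
  · have hdiv : S j t ≤ S k t / A k j := by
      refine S_le hnn hmu hS hjt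
        (div_nonneg (S_nonneg hnn hmu hS k t) hpos.le) ?_
      intro P hP
      obtain ⟨hkP, hwP⟩ := pathIn_cons hP hpos
      have hle : pathWeight A (k :: P) ≤ S k t := by
        by_cases hkt : k = t
        · subst hkt
          rw [hS.1]
          exact closedWalk_le_one hmu hkP
        · exact pathWeight_le_S hnn hmu hS hkt hkP
      rw [le_div_iff₀ hpos, mul_comm, ← hwP]
      exact hle
    calc A k j * S j t ≤ A k j * (S k t / A k j) :=
      mul_le_mul_of_nonneg_left hdiv hpos.le
    _ = S k t := by field_simp

lemma zip_rotate_one {α β : Type*} : ∀ (l : List α) (m : List β), l.length = m.length →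
    (l.rotate 1).zip (m.rotate 1) = (l.zip m).rotate 1
  | [], [], _ => rfl
  | [], b :: t, h => by simp at h
  | a :: s, [], h => by simp at h
  | a :: s, b :: t, h => by
    rw [show (1:ℕ) = 0 + 1 from rfl, List.rotate_cons_succ, List.rotate_cons_succ,
      List.zip_cons_cons, List.rotate_cons_succ, List.rotate_zero, List.rotate_zero,
      List.rotate_zero, List.zip_append (by simpa using h)]
    rfl

lemma zip_rotate {α β : Type*} : ∀ (k : ℕ) (l : List α) (m : List β), l.length = m.length →
    (l.rotate k).zip (m.rotate k) = (l.zip m).rotate k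
  | 0, l, m, _ => by simp
  | (k+1), l, m, h => by
    have h1 : l.rotate (k+1) = (l.rotate 1).rotate k := by rw [List.rotate_rotate]; ring_nf
    have h2 : m.rotate (k+1) = (m.rotate 1).rotate k := by rw [List.rotate_rotate]; ring_nf
    rw [h1, h2, zip_rotate k _ _ (by simp [h]), zip_rotate_one l m h, List.rotate_rotate]
    ring_nf

lemma cycleEdges_rotate' {n : ℕ} (c : List (Fin n)) (k : ℕ) :
    cycleEdges (c.rotate k) = (cycleEdges c).rotate k := by
  unfold cycleEdges
  rw [List.rotate_rotate, show k + 1 = 1 + k by ring, ← List.rotate_rotate,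
    zip_rotate k c (c.rotate 1) (by simp)]

lemma crit_exists {S : Matrix (Fin n) (Fin n) ℝ}
    (hnn : ∀ i' j, 0 ≤ A i' j)
    (hmu : IsGreatest {x | ∃ c, IsCycleIn A c ∧ x = cycleGeoMean A c} 1)
    (hS : IsKleeneStar A S) {i : Fin n} (hi : CriticalNode A i) :
    ∃ j, A i j * S j i = S i i := by
  obtain ⟨c, hcyc, hgeo, hmem⟩ := hi
  have hprodpos : 0 < ((cycleEdges c).map fun e => A e.1 e.2).prod := by
    apply List.prod_pos
    rintro x hx
    obtain ⟨e, he, rfl⟩ := List.mem_map.mp hx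
    exact hcyc.2 e he
  have hlen : c.length ≠ 0 := by simpa [List.length_eq_zero_iff] using hcyc.1
  have hprod : ((cycleEdges c).map fun e => A e.1 e.2).prod = 1 :=
    rpow_aux_eq hlen hprodpos hgeo
  obtain ⟨X, Y, hc⟩ := List.append_of_mem hmem
  have hd : i :: (Y ++ X) = c.rotate X.length := by
    rw [hc, List.rotate_eq_drop_append_take (by simp), List.drop_left, List.take_left]
    rfl
  have hperm : (cycleEdges (i :: (Y ++ X))).Perm (cycleEdges c) := by
    rw [hd, cycleEdges_rotate']
    exact List.rotate_perm _ _
  have hdpos : ∀ e ∈ cycleEdges (i :: (Y ++ X)), 0 < A e.1 e.2 :=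
    fun e he => hcyc.2 e (hperm.mem_iff.mp he)
  have hdprod : ((cycleEdges (i :: (Y ++ X))).map fun e => A e.1 e.2).prod = 1 := by
    rw [(hperm.map _).prod_eq, hprod]
  have hPedge : pathEdges ((i :: (Y ++ X)) ++ [i]) = cycleEdges (i :: (Y ++ X)) :=
    cycleEdges_closed i (Y ++ X)
  have hwP : pathWeight A ((i :: (Y ++ X)) ++ [i]) = 1 := by
    rw [pathWeight, hPedge, hdprod]
  cases hYX : Y ++ X with
  | nil =>
    -- d = [i], self-loop with A i i = 1
    rw [hYX] at hwP
    have hAii : A i i = 1 := by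
      simpa [pathWeight, pathEdges] using hwP
    exact ⟨i, by rw [hAii, one_mul]⟩
  | cons j R =>
    rw [hYX] at hwP hPedge hdpos
    -- P = i :: j :: (R ++ [i]), W = j :: (R ++ [i])
    set W : List (Fin n) := (j :: R) ++ [i] with hWdef
    have hPform : (i :: (j :: R)) ++ [i] = i :: W := rfl
    have hij_mem : (i, j) ∈ pathEdges ((i :: (j :: R)) ++ [i]) := by
      rw [hPform, hWdef]
      exact List.mem_cons_self
    have hAij : 0 < A i j := hdpos _ (hPedge ▸ hij_mem)
    have hwsplit : A i j * pathWeight A W = 1 := by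
      have : pathWeight A (i :: W) = A i j * pathWeight A W := by
        rw [pathWeight, pathWeight, hWdef,
          show pathEdges (i :: ((j :: R) ++ [i])) = (i, j) :: pathEdges ((j :: R) ++ [i]) from rfl]
        simp
      rw [← this, ← hPform, hwP]
    have hW : IsPathIn A j i W := by
      refine ⟨rfl, List.getLast?_concat, by simp [hWdef], ?_⟩
      intro e he
      apply hdpos e
      rw [← hPedge, hPform]
      exact List.mem_cons_of_mem _ he
    by_cases hji : j = i
    · subst hji
      have hWle : pathWeight A W ≤ 1 := closedWalk_le_one hmu hW
      have hWpos : 0 < pathWeight A W := by nlinarith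
      have hAge : 1 ≤ A j j := by nlinarith
      have hub : A j j * S j j ≤ S j j := gen_UB hnn hmu hS j j j
      refine ⟨j, le_antisymm hub ?_⟩
      rw [hS.1, mul_one]
      exact hAge
    · have hSge : pathWeight A W ≤ S j i := pathWeight_le_S hnn hmu hS hji hW
      have hub : A i j * S j i ≤ S i i := gen_UB hnn hmu hS i i j
      refine ⟨j, le_antisymm hub ?_⟩
      rw [hS.1]
      calc (1:ℝ) = A i j * pathWeight A W := hwsplit.symm
      _ ≤ A i j * S j i := mul_le_mul_of_nonneg_left hSge hAij.le


end AuxStmt9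

/-- if `A` is irreducible nonnegative with `μ(A) = 1` and `i` is a
critical node, then the `i`-th column of the Kleene star `A*` is a max eigenvector of
`A` for the eigenvalue `1`: `max_j a_{kj} a*_{ji} = a*_{ki}` for every `k`. -/
theorem stmt_9 {n : ℕ} (A : Matrix (Fin n) (Fin n) ℝ)
    (hnn : ∀ i j, 0 ≤ A i j) (hirr : IrreducibleMat A)
    (hmu : IsGreatest {x | ∃ c, IsCycleIn A c ∧ x = cycleGeoMean A c} 1)
    (S : Matrix (Fin n) (Fin n) ℝ) (hS : IsKleeneStar A S)
    (i : Fin n) (hi : CriticalNode A i) :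
    ∀ k : Fin n, IsGreatest (Set.range fun j => A k j * S j i) (S k i) := by
  intro k
  by_cases hk : k = i
  · subst hk
    obtain ⟨j, hj⟩ := crit_exists hnn hmu hS hi
    exact ⟨⟨j, hj⟩, by rintro x ⟨j', rfl⟩; exact gen_UB hnn hmu hS k k j'⟩
  · obtain ⟨j₀, -, hmax⟩ := Finset.exists_max_image Finset.univ
      (fun j => A k j * S j i) ⟨i, Finset.mem_univ i⟩
    have hMle : A k j₀ * S j₀ i ≤ S k i := gen_UB hnn hmu hS i k j₀
    have hSleM : S k i ≤ A k j₀ * S j₀ i := by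
      rw [hS.2 k i hk]
      refine csSup_le ⟨0, Set.mem_insert _ _⟩ ?_
      rintro x hx
      rcases Set.mem_insert_iff.mp hx with rfl | ⟨P, hP, rfl⟩
      · exact mul_nonneg (hnn k j₀) (S_nonneg hnn hmu hS j₀ i)
      · obtain ⟨h1, h2, h3, h4⟩ := hP
        obtain ⟨P₂, rfl⟩ : ∃ Q, P = k :: Q := by
          cases P with
          | nil => simp at h1
          | cons a Q => exact ⟨Q, by simpa using (by simpa using h1 : a = k) ▸ rfl⟩
        obtain ⟨v, R, rfl⟩ : ∃ v R, P₂ = v :: R := by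
          cases P₂ with
          | nil => simp at h3
          | cons v R => exact ⟨v, R, rfl⟩
        have hwcons : pathWeight A (k :: v :: R) = A k v * pathWeight A (v :: R) := by
          rw [pathWeight, pathWeight,
            show pathEdges (k :: v :: R) = (k, v) :: pathEdges (v :: R) from rfl]
          simp
        have hWleS : pathWeight A (v :: R) ≤ S v i := by
          cases R with
          | nil =>
            have hv : v = i := by simpa using h2
            subst hv
            rw [hS.1]
            simp [pathWeight, pathEdges]
          | cons r R' =>
            have hPvi : IsPathIn A v i (v :: r :: R') := by
              refine ⟨rfl, by simpa using h2, by simp, ?_⟩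
              intro e he
              exact h4 e (List.mem_cons_of_mem _ he)
            by_cases hvi : v = i
            · subst hvi
              rw [hS.1]
              exact closedWalk_le_one hmu hPvi
            · exact pathWeight_le_S hnn hmu hS hvi hPvi
        calc pathWeight A (k :: v :: R) = A k v * pathWeight A (v :: R) := hwcons
        _ ≤ A k v * S v i := mul_le_mul_of_nonneg_left hWleS (hnn k v)
        _ ≤ A k j₀ * S j₀ i := hmax v (Finset.mem_univ v)
    have hEq : S k i = A k j₀ * S j₀ i := le_antisymm hSleM hMle
    exact ⟨⟨j₀, hEq.symm⟩, by rintro x ⟨j', rfl⟩; exact (hmax j' (Finset.mem_univ j')).trans hEq.ge⟩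
end

section
/- Let A be an n×n irreducible matrix with nonnegative real entries and μ(A) = 1, and let i ≠ j be critical nodes of A belonging to the same strongly connected component of the critical graph D^C(A). Then the columns A*_{·i} and A*_{·j} of the Kleene star are positive scalar multiples of each other: there exists λ > 0 with a*_{ki} = λ a*_{kj} for all k ∈ {1,…,n}. -/
open scoped Classical

namespace Aux10

variable {n : ℕ}

lemma pathEdges_nil : pathEdges ([] : List (Fin n)) = [] := rfl
lemma pathEdges_single (a : Fin n) : pathEdges [a] = [] := rfl
lemma pathEdges_cons_cons (a b : Fin n) (l : List (Fin n)) :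
    pathEdges (a :: b :: l) = (a, b) :: pathEdges (b :: l) := rfl

lemma pathEdges_append (x : Fin n) : ∀ (P Q : List (Fin n)),
    pathEdges (P ++ x :: Q) = pathEdges (P ++ [x]) ++ pathEdges (x :: Q)
  | [], Q => by simp [pathEdges_single]
  | [p], Q => by simp [pathEdges_cons_cons, pathEdges_single]
  | p :: p' :: P', Q => by
    have := pathEdges_append x (p' :: P') Q
    simp only [List.cons_append, pathEdges_cons_cons] at *
    rw [this]

lemma pathWeight_append (A : Matrix (Fin n) (Fin n) ℝ) (x : Fin n) (P Q : List (Fin n)) :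
    pathWeight A (P ++ x :: Q) = pathWeight A (P ++ [x]) * pathWeight A (x :: Q) := by
  unfold pathWeight
  rw [pathEdges_append, List.map_append, List.prod_append]

lemma eq_append_of_mem_pathEdges {a b : Fin n} :
    ∀ {l : List (Fin n)}, (a, b) ∈ pathEdges l → ∃ X Y, l = X ++ a :: b :: Y
  | [], h => by simp [pathEdges_nil] at h
  | [x], h => by simp [pathEdges_single] at h
  | x :: y :: l, h => by
    rw [pathEdges_cons_cons, List.mem_cons] at h
    rcases h with h | h
    · have h1 : a = x := congrArg Prod.fst h
      have h2 : b = y := congrArg Prod.snd h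
      subst h1; subst h2
      exact ⟨[], l, rfl⟩
    · obtain ⟨X, Y, hXY⟩ := eq_append_of_mem_pathEdges h
      exact ⟨x :: X, Y, by simp [hXY]⟩

lemma zip_trunc {α β : Type*} : ∀ (l₂ : List β) (l₁ s : List α), l₂.length ≤ l₁.length →
    (l₁ ++ s).zip l₂ = l₁.zip l₂
  | [], l₁, s, _ => by simp
  | b :: t, [], s, h => by simp at h
  | b :: t, a :: l₁, s, h => by
    simp only [List.cons_append, List.zip_cons_cons]
    rw [zip_trunc t l₁ s (by simpa using h)]

lemma cycleEdges_eq_pathEdges (a : Fin n) (t : List (Fin n)) :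
    cycleEdges (a :: t) = pathEdges ((a :: t) ++ [a]) := by
  have hrot : (a :: t).rotate 1 = t ++ [a] := by
    rw [List.rotate_eq_drop_append_take (by simp)]
    simp
  have : pathEdges ((a :: t) ++ [a]) = ((a :: t) ++ [a]).zip (t ++ [a]) := rfl
  rw [cycleEdges, hrot, this, zip_trunc (t ++ [a]) (a :: t) [a] (by simp)]

/-- loose walk predicate (allows single vertex) -/
def Wk (A : Matrix (Fin n) (Fin n) ℝ) (a b : Fin n) (P : List (Fin n)) : Prop :=
  P.head? = some a ∧ P.getLast? = some b ∧ ∀ e ∈ pathEdges P, 0 < A e.1 e.2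

lemma Wk.ne_nil {A : Matrix (Fin n) (Fin n) ℝ} {a b : Fin n} {P : List (Fin n)}
    (h : Wk A a b P) : P ≠ [] := by
  intro hP; rw [hP] at h; simp [Wk] at h

lemma Wk.pos {A : Matrix (Fin n) (Fin n) ℝ} {a b : Fin n} {P : List (Fin n)}
    (h : Wk A a b P) : 0 < pathWeight A P := by
  apply List.prod_pos
  intro x hx
  simp only [List.mem_map] at hx
  obtain ⟨e, he, rfl⟩ := hx
  exact h.2.2 e he

lemma Wk.concat {A : Matrix (Fin n) (Fin n) ℝ} {a b c : Fin n} {P Q : List (Fin n)}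
    (h1 : Wk A a b P) (h2 : Wk A b c Q) :
    Wk A a c (P ++ Q.tail) ∧
      pathWeight A (P ++ Q.tail) = pathWeight A P * pathWeight A Q := by
  obtain ⟨hP1, hP2, hP3⟩ := h1
  obtain ⟨hQ1, hQ2, hQ3⟩ := h2
  have hPne : P ≠ [] := by intro h; rw [h] at hP1; simp at hP1
  have hQne : Q ≠ [] := by intro h; rw [h] at hQ1; simp at hQ1
  obtain ⟨q, Q', rfl⟩ := List.exists_cons_of_ne_nil hQne
  rw [List.head?_cons] at hQ1
  have hq : q = b := Option.some_inj.mp hQ1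
  subst q
  cases Q' with
  | nil =>
    simp only [List.tail_cons, List.append_nil]
    have hc : b = c := by simpa using hQ2
    subst hc
    refine ⟨⟨hP1, hP2, hP3⟩, ?_⟩
    simp [pathWeight, pathEdges_single]
  | cons q' Q'' =>
    have hPd : P.dropLast ++ [b] = P := by
      have := List.dropLast_append_getLast hPne
      have hlast : P.getLast hPne = b := by
        rw [List.getLast?_eq_getLast hPne] at hP2
        exact (Option.some_inj.mp hP2)
      rw [hlast] at this; exact this
    have hsplit : P ++ (b :: q' :: Q'').tail = P.dropLast ++ b :: (q' :: Q'') := by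
      rw [← hPd]; simp
    constructor
    · refine ⟨?_, ?_, ?_⟩
      · rw [List.head?_append, hP1]; rfl
      · rw [hsplit, List.getLast?_append, hQ2]
        rfl
      · rw [hsplit, pathEdges_append]
        intro e he
        rw [List.mem_append] at he
        rcases he with he | he
        · rw [hPd] at he; exact hP3 e he
        · exact hQ3 e he
    · rw [hsplit, pathWeight_append, hPd]

lemma pathIn_wk {A : Matrix (Fin n) (Fin n) ℝ} {a b : Fin n} {P : List (Fin n)}
    (h : IsPathIn A a b P) : Wk A a b P := ⟨h.1, h.2.1, h.2.2.2⟩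

lemma pathIn_concat {A : Matrix (Fin n) (Fin n) ℝ} {a b c : Fin n} {P Q : List (Fin n)}
    (h1 : IsPathIn A a b P) (h2 : Wk A b c Q) :
    IsPathIn A a c (P ++ Q.tail) ∧
      pathWeight A (P ++ Q.tail) = pathWeight A P * pathWeight A Q := by
  obtain ⟨hw, he⟩ := Wk.concat (pathIn_wk h1) h2
  refine ⟨⟨hw.1, hw.2.1, ?_, hw.2.2⟩, he⟩
  calc (2:ℕ) ≤ P.length := h1.2.2.1
  _ ≤ (P ++ Q.tail).length := by simp

lemma cycle_prod_pos {A : Matrix (Fin n) (Fin n) ℝ} {c : List (Fin n)} (hc : IsCycleIn A c) :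
    0 < ((cycleEdges c).map fun e => A e.1 e.2).prod := by
  apply List.prod_pos
  intro x hx
  obtain ⟨e, he, rfl⟩ := List.mem_map.mp hx
  exact hc.2 e he

lemma cycle_prod_le_one {A : Matrix (Fin n) (Fin n) ℝ}
    (hmu : IsGreatest {x | ∃ c, IsCycleIn A c ∧ x = cycleGeoMean A c} 1)
    {c : List (Fin n)} (hc : IsCycleIn A c) :
    ((cycleEdges c).map fun e => A e.1 e.2).prod ≤ 1 := by
  set p := ((cycleEdges c).map fun e => A e.1 e.2).prod with hp
  have hpos : 0 < p := cycle_prod_pos hc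
  have hle : cycleGeoMean A c ≤ 1 := hmu.2 ⟨c, hc, rfl⟩
  have hlen : c.length ≠ 0 := by simpa [List.length_eq_zero_iff] using hc.1
  have hkey := Real.rpow_inv_natCast_pow hpos.le hlen (x := p)
  calc p = (p ^ ((c.length : ℝ))⁻¹) ^ c.length := hkey.symm
  _ ≤ 1 := pow_le_one₀ (Real.rpow_nonneg hpos.le _) hle

lemma cycle_prod_eq_one {A : Matrix (Fin n) (Fin n) ℝ}
    {c : List (Fin n)} (hc : IsCycleIn A c) (hgeo : cycleGeoMean A c = 1) :
    ((cycleEdges c).map fun e => A e.1 e.2).prod = 1 := by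
  set p := ((cycleEdges c).map fun e => A e.1 e.2).prod with hp
  have hpos : 0 < p := cycle_prod_pos hc
  have hlen : c.length ≠ 0 := by simpa [List.length_eq_zero_iff] using hc.1
  have hkey := Real.rpow_inv_natCast_pow hpos.le hlen (x := p)
  calc p = (p ^ ((c.length : ℝ))⁻¹) ^ c.length := hkey.symm
  _ = 1 := by rw [show p ^ ((c.length : ℝ))⁻¹ = 1 from hgeo, one_pow]

lemma closed_walk_le_one {A : Matrix (Fin n) (Fin n) ℝ}
    (hmu : IsGreatest {x | ∃ c, IsCycleIn A c ∧ x = cycleGeoMean A c} 1)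
    {a : Fin n} {P : List (Fin n)} (hP : IsPathIn A a a P) : pathWeight A P ≤ 1 := by
  obtain ⟨h1, h2, h3, h4⟩ := hP
  match P, h3 with
  | x :: y :: P'', _ =>
    have hx : x = a := by rw [List.head?_cons] at h1; exact Option.some_inj.mp h1
    subst hx
    have hne : x :: y :: P'' ≠ [] := by simp
    have hlast : (x :: y :: P'').getLast hne = x := by
      rw [List.getLast?_eq_getLast hne] at h2
      exact Option.some_inj.mp h2
    have hPd : (x :: (y :: P'').dropLast) ++ [x] = x :: y :: P'' := by
      have := List.dropLast_append_getLast hne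
      rw [hlast] at this
      simpa using this
    set t := (y :: P'').dropLast with ht
    have hcyc : IsCycleIn A (x :: t) := by
      refine ⟨by simp, ?_⟩
      rw [cycleEdges_eq_pathEdges, hPd]
      exact h4
    have hw : pathWeight A (x :: y :: P'') =
        ((cycleEdges (x :: t)).map fun e => A e.1 e.2).prod := by
      rw [cycleEdges_eq_pathEdges, hPd]
      rfl
    rw [hw]
    exact cycle_prod_le_one hmu hcyc

lemma edge_path {A : Matrix (Fin n) (Fin n) ℝ} {a b : Fin n} (h : 0 < A a b) :
    IsPathIn A a b [a, b] ∧ pathWeight A [a, b] = A a b := by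
  refine ⟨⟨rfl, by simp, by simp, ?_⟩, ?_⟩
  · intro e he
    rw [pathEdges_cons_cons, pathEdges_single] at he
    simp only [List.mem_singleton] at he
    subst he
    exact h
  · show ((pathEdges [a,b]).map fun e => A e.1 e.2).prod = A a b
    rw [pathEdges_cons_cons, pathEdges_single]
    simp

lemma exists_path_of_transGen {A : Matrix (Fin n) (Fin n) ℝ} {a b : Fin n}
    (h : Relation.TransGen (edgeRel A) a b) : ∃ P, IsPathIn A a b P := by
  induction h with
  | single h => exact ⟨[a, _], (edge_path h).1⟩
  | tail h1 h2 ih =>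
    obtain ⟨P, hP⟩ := ih
    exact ⟨_, (pathIn_concat hP (pathIn_wk (edge_path h2).1)).1⟩

lemma crit_edge_struct {A : Matrix (Fin n) (Fin n) ℝ} {a b : Fin n}
    (h : CriticalEdge A a b) :
    0 < A a b ∧ ∃ R, IsPathIn A b a R ∧ A a b * pathWeight A R = 1 := by
  obtain ⟨c, hc, hgeo, hmem⟩ := h
  obtain ⟨hh, t, rfl⟩ := List.exists_cons_of_ne_nil hc.1
  have hced := cycleEdges_eq_pathEdges hh t
  have hprod : ((cycleEdges (hh :: t)).map fun e => A e.1 e.2).prod = 1 :=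
    cycle_prod_eq_one hc hgeo
  set W := (hh :: t) ++ [hh] with hW
  have hWedges : ∀ e ∈ pathEdges W, 0 < A e.1 e.2 := by
    intro e he; apply hc.2; rwa [hced]
  have hWweight : pathWeight A W = 1 := by
    rw [pathWeight, ← hced, hprod]
  have hWhead : W.head? = some hh := rfl
  have hWlast : W.getLast? = some hh := by
    rw [hW, List.getLast?_append]; rfl
  have hmemW : (a, b) ∈ pathEdges W := by rwa [hced] at hmem
  obtain ⟨X, Y, hXY⟩ := eq_append_of_mem_pathEdges hmemW
  have hXYe : X ++ a :: (b :: Y) = W := hXY.symm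
  have hEd : pathEdges W = pathEdges (X ++ [a]) ++ ((a,b) :: pathEdges (b :: Y)) := by
    rw [← hXYe, pathEdges_append, pathEdges_cons_cons]
  have hWd : pathWeight A W
      = pathWeight A (X ++ [a]) * (A a b * pathWeight A (b :: Y)) := by
    rw [← hXYe, pathWeight_append]
    have hstep : pathWeight A (a :: b :: Y) = A a b * pathWeight A (b :: Y) := by
      simp [pathWeight, pathEdges_cons_cons]
    rw [hstep]
  have hab : 0 < A a b := hWedges (a, b) (by rw [hEd]; simp)
  refine ⟨hab, ?_⟩
  by_cases h0 : X = [] ∧ Y = []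
  · obtain ⟨rfl, rfl⟩ := h0
    have hW2 : W = [a, b] := hXY
    have ha : a = hh := by
      rw [hW2] at hWhead; exact Option.some_inj.mp hWhead
    have hb : b = hh := by
      rw [hW2] at hWlast
      simpa using hWlast
    have hba : b = a := by rw [ha, hb]
    have hA1 : A a b = 1 := by
      have := hWweight
      rw [hWd] at this
      simpa [pathWeight, pathEdges_single] using this
    have hAba : 0 < A b a := by
      rw [hba] at hab ⊢
      exact hab
    refine ⟨[b, a], (edge_path hAba).1, ?_⟩
    rw [(edge_path hAba).2]
    rw [hba] at hA1 ⊢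
    rw [hA1]
    norm_num
  · -- return walk: (b :: Y) ++ (X ++ [a]).tail
    have hw2 : Wk A b hh (b :: Y) := by
      refine ⟨rfl, ?_, ?_⟩
      · have hg1 : (b :: Y).getLast? = some ((b :: Y).getLast (by simp)) :=
          List.getLast?_eq_getLast _
        have hg2 : (a :: b :: Y).getLast? = (b :: Y).getLast? := by
          cases Y <;> simp
        rw [← hXYe, List.getLast?_append, hg2, hg1] at hWlast
        rw [hg1]
        exact hWlast
      · intro e he
        apply hWedges
        rw [hEd]
        simp only [List.mem_append, List.mem_cons]
        right; right; exact he
    have hw1 : Wk A hh a (X ++ [a]) := by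
      refine ⟨?_, by simp, ?_⟩
      · have : (X ++ [a]).head? = W.head? := by
          rw [← hXYe]
          cases X <;> simp
        rw [this, hWhead]
      · intro e he
        apply hWedges
        rw [hEd]
        simp only [List.mem_append]
        left; exact he
    obtain ⟨hwk, hwt⟩ := Wk.concat hw2 hw1
    refine ⟨(b :: Y) ++ (X ++ [a]).tail, ⟨hwk.1, hwk.2.1, ?_, hwk.2.2⟩, ?_⟩
    · have hlen0 : X.length + Y.length ≠ 0 := by
        intro hcon
        apply h0
        have hX : X.length = 0 := by omega
        have hY : Y.length = 0 := by omega
        exact ⟨List.length_eq_zero_iff.mp hX, List.length_eq_zero_iff.mp hY⟩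
      simp only [List.length_append, List.length_cons, List.length_tail]
      omega
    · rw [hwt]
      have hthis := hWweight
      rw [hWd] at hthis
      linear_combination hthis

end Aux10

/-- if `A` is irreducible nonnegative with `μ(A) = 1` and `i ≠ j`
are critical nodes lying in the same strongly connected component of the critical
graph `D^C(A)`, then the columns `A*_{·i}` and `A*_{·j}` of the Kleene star are
positive scalar multiples of each other. -/
theorem stmt_10 {n : ℕ} (A : Matrix (Fin n) (Fin n) ℝ)
    (hnn : ∀ i j, 0 ≤ A i j) (hirr : IrreducibleMat A)
    (hmu : IsGreatest {x | ∃ c, IsCycleIn A c ∧ x = cycleGeoMean A c} 1)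
    (S : Matrix (Fin n) (Fin n) ℝ) (hS : IsKleeneStar A S)
    (i j : Fin n) (hij : i ≠ j)
    (hi : CriticalNode A i) (hj : CriticalNode A j)
    (hsame : SameCritComponent A i j) :
    ∃ lam : ℝ, 0 < lam ∧ ∀ k : Fin n, S k i = lam * S k j := by
  classical
  open Aux10 in
  -- basic sup facts
  have hbdd : ∀ a b : Fin n, a ≠ b →
      BddAbove (insert (0:ℝ) {x | ∃ P, IsPathIn A a b P ∧ x = pathWeight A P}) := by
    intro a b hab
    obtain ⟨Q, hQ⟩ := exists_path_of_transGen (hirr b a (Ne.symm hab))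
    have hQpos : 0 < pathWeight A Q := Wk.pos (pathIn_wk hQ)
    refine ⟨1 / pathWeight A Q, ?_⟩
    intro x hx
    rcases Set.mem_insert_iff.mp hx with rfl | ⟨P, hP, rfl⟩
    · positivity
    · obtain ⟨hcat, hw⟩ := pathIn_concat hP (pathIn_wk hQ)
      have hcw : pathWeight A (P ++ Q.tail) ≤ 1 := closed_walk_le_one hmu hcat
      rw [hw] at hcw
      exact (le_div_iff₀ hQpos).mpr hcw
  have hSnn : ∀ a b : Fin n, 0 ≤ S a b := by
    intro a b
    by_cases hab : a = b
    · subst hab; rw [hS.1 a]; norm_num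
    · rw [hS.2 a b hab]
      exact le_csSup (hbdd a b hab) (Set.mem_insert _ _)
  have hle_S : ∀ (a b : Fin n) (P : List (Fin n)), a ≠ b → IsPathIn A a b P →
      pathWeight A P ≤ S a b := by
    intro a b P hab hP
    rw [hS.2 a b hab]
    exact le_csSup (hbdd a b hab) (Set.mem_insert_of_mem _ ⟨P, hP, rfl⟩)
  have hS_le : ∀ (a b : Fin n) (x : ℝ), a ≠ b → 0 ≤ x →
      (∀ P, IsPathIn A a b P → pathWeight A P ≤ x) → S a b ≤ x := by
    intro a b x hab hx h
    rw [hS.2 a b hab]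
    apply csSup_le ⟨0, Set.mem_insert _ _⟩
    intro y hy
    rcases Set.mem_insert_iff.mp hy with rfl | ⟨P, hP, rfl⟩
    · exact hx
    · exact h P hP
  have mulA : ∀ (a b : Fin n) (y z : ℝ), a ≠ b → 0 ≤ y → 0 ≤ z →
      (∀ P, IsPathIn A a b P → pathWeight A P * y ≤ z) → S a b * y ≤ z := by
    intro a b y z hab hy hz h
    rcases hy.eq_or_lt with rfl | hy'
    · simpa using hz
    · have hSd : S a b ≤ z / y :=
        hS_le a b _ hab (div_nonneg hz hy'.le)
          (fun P hP => (le_div_iff₀ hy').mpr (h P hP))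
      calc S a b * y ≤ (z / y) * y := mul_le_mul_of_nonneg_right hSd hy'.le
      _ = z := div_mul_cancel₀ z hy'.ne'
  have mulA' : ∀ (a b : Fin n) (x z : ℝ), a ≠ b → 0 ≤ x → 0 ≤ z →
      (∀ Q, IsPathIn A a b Q → x * pathWeight A Q ≤ z) → x * S a b ≤ z := by
    intro a b x z hab hx hz h
    rw [mul_comm]
    exact mulA a b x z hab hx hz (fun P hP => by rw [mul_comm]; exact h P hP)
  have tri : ∀ a b c : Fin n, a ≠ b → b ≠ c → S a b * S b c ≤ S a c := by
    intro a b c hab hbc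
    have hZ : 0 ≤ S a c := hSnn a c
    apply mulA a b _ _ hab (hSnn b c) hZ
    intro P hP
    apply mulA' b c _ _ hbc (Wk.pos (pathIn_wk hP)).le hZ
    intro Q hQ
    obtain ⟨hcat, hw⟩ := pathIn_concat hP (pathIn_wk hQ)
    rw [← hw]
    by_cases hac : a = c
    · subst hac
      rw [hS.1 a]
      exact closed_walk_le_one hmu hcat
    · exact hle_S a c _ hac hcat
  -- paths along the critical chain
  have chain : ∀ b : Fin n, Relation.ReflTransGen (CriticalEdge A) i b →
      i = b ∨ ∃ P R, IsPathIn A i b P ∧ IsPathIn A b i R ∧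
        pathWeight A P * pathWeight A R = 1 := by
    intro b hb
    induction hb with
    | refl => exact Or.inl rfl
    | @tail b' c hib hedge ih =>
      obtain ⟨hpos, R₁, hR₁, hwR₁⟩ := crit_edge_struct hedge
      rcases ih with rfl | ⟨P₀, R₀, hP₀, hR₀, hw₀⟩
      · right
        refine ⟨[i, c], R₁, (edge_path hpos).1, hR₁, ?_⟩
        rw [(edge_path hpos).2]
        exact hwR₁
      · right
        obtain ⟨hPc, hPw⟩ := pathIn_concat hP₀ (pathIn_wk (edge_path hpos).1)
        obtain ⟨hRc, hRw⟩ := pathIn_concat hR₁ (pathIn_wk hR₀)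
        refine ⟨_, _, hPc, hRc, ?_⟩
        rw [hPw, hRw, (edge_path hpos).2]
        calc pathWeight A P₀ * A b' c * (pathWeight A R₁ * pathWeight A R₀)
            = (pathWeight A P₀ * pathWeight A R₀) * (A b' c * pathWeight A R₁) := by ring
        _ = 1 := by rw [hw₀, hwR₁, one_mul]
  obtain ⟨P, R, hP, hR, hw⟩ := (chain j hsame.1).resolve_left hij
  have hRpos : 0 < pathWeight A R := Wk.pos (pathIn_wk hR)
  have hPpos : 0 < pathWeight A P := Wk.pos (pathIn_wk hP)
  have hSji_pos : 0 < S j i := lt_of_lt_of_le hRpos (hle_S j i R (Ne.symm hij) hR)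
  have hprod_le : S i j * S j i ≤ 1 := by
    have h := tri i j i hij (Ne.symm hij)
    rwa [hS.1 i] at h
  have hprod_ge : (1:ℝ) ≤ S i j * S j i := by
    calc (1:ℝ) = pathWeight A P * pathWeight A R := hw.symm
    _ ≤ S i j * S j i :=
        mul_le_mul (hle_S i j P hij hP) (hle_S j i R (Ne.symm hij) hR) hRpos.le (hSnn i j)
  have hprod : S i j * S j i = 1 := le_antisymm hprod_le hprod_ge
  refine ⟨S j i, hSji_pos, ?_⟩
  intro k
  by_cases hki : k = i
  · subst hki
    rw [hS.1 k]
    have : S j k * S k j = 1 := by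
      rw [mul_comm]; exact hprod
    rw [← this]
  · by_cases hkj : k = j
    · subst hkj
      rw [hS.1 k, mul_one]
    · have h1 : S k j * S j i ≤ S k i := tri k j i hkj (Ne.symm hij)
      have h2 : S k i * S i j ≤ S k j := tri k i j hki hij
      have e1 : S k i ≤ S k j * S j i := by
        calc S k i = (S k i * S i j) * S j i := by rw [mul_assoc, hprod, mul_one]
        _ ≤ S k j * S j i := mul_le_mul_of_nonneg_right h2 (hSnn j i)
      have : S k i = S k j * S j i := le_antisymm e1 h1
      rw [this, mul_comm]
end
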